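/- arXiv:1903.09796 — 12 statements merged into one kernel-verified Lean document; each statement's English description precedes it below -/
import Mathlib

section
/- Let n ≥ 2 and let S be a dense subset of ℝ that is closed under powering (i.e., for every α ∈ S and every non-zero integer m, α^m ∈ S). Then the set of multiplicatively dependent vectors with coordinates in S is dense in ℝⁿ. -/
/-!
Pick `β ∈ S` slightly below `-1`. Its even powers form a geometric progression of ratio `β² ≈ 1`
covering `(0, ∞)` and its odd powers one covering `(-∞, 0)`, so every bounded target is
approximated by some `β ^ q` with `q ≠ 0`, up to an error of order `β² - 1`. A vector all of whose
coordinates are powers `β ^ pᵢ` of one element is multiplicatively dependent: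
`(β ^ p₀) ^ p₁ · (β ^ p₁) ^ (-p₀) = 1`.
-/

open Filter Topology

lemma exists_prod_zpow_zpow_eq_one {ι G₀ : Type*} [Fintype ι] [DecidableEq ι]
    [CommGroupWithZero G₀] {β : G₀} (hβ : β ≠ 0) (p : ι → ℤ) {i j : ι} (hij : i ≠ j)
    (hj : p j ≠ 0) : ∃ k : ι → ℤ, k ≠ 0 ∧ ∏ l, (β ^ p l) ^ k l = 1 := by
  refine ⟨Pi.single i (p j) - Pi.single j (p i), fun hk => hj ?_, ?_⟩
  · simpa [hij] using congrFun hk i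
  · rw [Fintype.prod_eq_mul i j hij fun l hl => by simp [hl.1, hl.2]]
    simp only [Pi.sub_apply, Pi.single_eq_same, Pi.single_eq_of_ne hij, Pi.single_eq_of_ne' hij,
      sub_zero, zero_sub, ← zpow_mul, zpow_neg, mul_comm (p j)]
    exact mul_inv_cancel₀ (zpow_ne_zero _ hβ)

section Archimedean

variable {K : Type*} [Field K] [LinearOrder K] [IsStrictOrderedRing K] [Archimedean K]

lemma exists_ne_zero_abs_zpow_sub_le {a s : K} (ha : 1 < a) (hs : 0 < s) :
    ∃ k : ℤ, k ≠ 0 ∧ |a ^ k - s| ≤ (a - 1) * s := by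
  -- both ends of the bracket `a ^ k < s ≤ a ^ (k + 1)` are close enough; one has a nonzero exponent
  obtain ⟨k, hlo, hhi⟩ := exists_mem_Ioc_zpow hs ha
  have hpos : 0 < a ^ k := zpow_pos (by linarith) k
  rw [zpow_add_one₀ (by positivity)] at hhi
  by_cases hk : k = 0
  · refine ⟨k + 1, by omega, abs_le.2 ⟨?_, ?_⟩⟩ <;>
      rw [zpow_add_one₀ (by positivity)] <;> nlinarith
  · refine ⟨k, hk, abs_le.2 ⟨?_, by nlinarith⟩⟩
    nlinarith [mul_nonneg hs.le (sq_nonneg (a - 1))]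

lemma exists_ne_zero_abs_zpow_sub_le_of_lt_neg_one {β t : K} (hβ : β < -1) (ht : t ≠ 0) :
    ∃ q : ℤ, q ≠ 0 ∧ |β ^ q - t| ≤ (β ^ 2 - 1) * |t| := by
  have hsq : 1 < β ^ 2 := by nlinarith
  have hsq_zpow : ∀ k : ℤ, β ^ (2 * k) = (β ^ 2) ^ k := fun k => by
    rw [zpow_mul]; norm_cast
  rcases ht.lt_or_gt with ht | ht
  · obtain ⟨k, -, hk⟩ := exists_ne_zero_abs_zpow_sub_le hsq
      (div_pos_of_neg_of_neg ht (by linarith : β < 0))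
    refine ⟨2 * k + 1, by omega, ?_⟩
    have hβ0 : β ≠ 0 := by linarith
    have hfactor : β ^ (2 * k + 1) - t = β * ((β ^ 2) ^ k - t / β) := by
      rw [zpow_add_one₀ hβ0, hsq_zpow]; field_simp
    calc |β ^ (2 * k + 1) - t| = |β| * |(β ^ 2) ^ k - t / β| := by rw [hfactor, abs_mul]
      _ ≤ -β * ((β ^ 2 - 1) * (t / β)) := by
        rw [abs_of_neg (by linarith)]; exact mul_le_mul_of_nonneg_left hk (by linarith)
      _ = (β ^ 2 - 1) * |t| := by rw [abs_of_neg ht]; field_simp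
  · obtain ⟨k, hk0, hk⟩ := exists_ne_zero_abs_zpow_sub_le hsq ht
    exact ⟨2 * k, by omega, by rwa [hsq_zpow, abs_of_pos ht]⟩

end Archimedean

lemma exists_ne_zero_abs_zpow_lt {β ε : ℝ} (hβ : 1 < |β|) (hε : 0 < ε) :
    ∃ q : ℤ, q ≠ 0 ∧ |β ^ q| < ε := by
  obtain ⟨N, hN, hN0⟩ := ((tendsto_pow_atTop_nhds_zero_of_lt_one (inv_nonneg.2 (abs_nonneg β))
    (inv_lt_one_of_one_lt₀ hβ)).eventually (gt_mem_nhds hε)).and (eventually_ne_atTop 0) |>.exists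
  refine ⟨-(N : ℤ), by omega, ?_⟩
  rwa [abs_zpow, zpow_neg, zpow_natCast, ← inv_pow]

lemma exists_ne_zero_abs_zpow_sub_lt {β t C ε : ℝ} (hβ : β < -1) (ht : |t| ≤ C)
    (hC : (β ^ 2 - 1) * C < ε) : ∃ q : ℤ, q ≠ 0 ∧ |β ^ q - t| < ε := by
  have hsq : 0 < β ^ 2 - 1 := by nlinarith
  rcases eq_or_ne t 0 with rfl | ht0
  · have hε : 0 < ε := lt_of_le_of_lt (mul_nonneg hsq.le (by simpa using ht)) hC
    simpa using exists_ne_zero_abs_zpow_lt (by rw [abs_of_neg (by linarith)]; linarith) hε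
  · obtain ⟨q, hq, h⟩ := exists_ne_zero_abs_zpow_sub_le_of_lt_neg_one hβ ht0
    exact ⟨q, hq, h.trans_lt ((mul_le_mul_of_nonneg_left ht hsq.le).trans_lt hC)⟩

lemma Dense.exists_lt_neg_one_sq_sub_one_mul_lt {S : Set ℝ} (hS : Dense S) (C : ℝ) {ε : ℝ}
    (hε : 0 < ε) : ∃ β ∈ S, β < -1 ∧ (β ^ 2 - 1) * C < ε := by
  have hnear : ∀ᶠ β in 𝓝 (-1 : ℝ), (β ^ 2 - 1) * C < ε :=
    Tendsto.eventually_lt_const (by norm_num [hε]) (by fun_prop : Continuous _).continuousAt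
  obtain ⟨l, hl, hsub⟩ := exists_Ioc_subset_of_mem_nhds hnear (exists_lt _)
  obtain ⟨β, hβS, hlβ, hβ⟩ := hS.exists_between hl
  exact ⟨β, hβS, hβ, hsub ⟨hlβ, hβ.le⟩⟩

/-- If `S` is dense in ℝ and closed under powering, then the multiplicatively
dependent vectors with coordinates in `S` are dense in ℝⁿ. -/
theorem stmt_1 (n : ℕ) (hn : 2 ≤ n) (S : Set ℝ) (hS : Dense S)
    (hpow : ∀ α ∈ S, ∀ m : ℤ, m ≠ 0 → α ^ m ∈ S) :
    Dense {v : Fin n → ℝ | (∀ i, v i ∈ S) ∧ (∀ i, v i ≠ 0) ∧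
      ∃ k : Fin n → ℤ, k ≠ 0 ∧ ∏ i, v i ^ k i = 1} := by
  rw [Metric.dense_iff]
  intro x ε hε
  obtain ⟨β, hβS, hβ, hβx⟩ := hS.exists_lt_neg_one_sq_sub_one_mul_lt ‖x‖ hε
  have hβ0 : β ≠ 0 := by linarith
  choose p hp0 hp using fun i =>
    exists_ne_zero_abs_zpow_sub_lt hβ (by simpa using norm_le_pi_norm x i) hβx
  refine ⟨fun i => β ^ p i, (dist_pi_lt_iff hε).2 fun i => hp i, fun i => hpow β hβS _ (hp0 i),
    fun i => zpow_ne_zero _ hβ0, ?_⟩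
  exact exists_prod_zpow_zpow_eq_one hβ0 p (i := ⟨0, by omega⟩) (j := ⟨1, by omega⟩)
    (by simp [Fin.ext_iff]) (hp0 _)
end

section
/- For any integer n ≥ 2, the set of multiplicatively dependent vectors with rational coordinates is dense in ℝⁿ. -/
/-!
Fix a rational `q > 1`. Every coordinate of the form `±q ^ m` has square a power of `q`, so any
two such coordinates `x, y` with `x ^ 2 = q ^ a`, `y ^ 2 = q ^ b` satisfy
`x ^ (2 * b) * y ^ (-2 * a) = 1` (or `x ^ 2 = 1` when `a = 0`). As `q → 1⁺` the powers `q ^ m`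
become `ε`-dense in `(0, ∞)`, so a single `q` close enough to `1` approximates every coordinate of a given vector.
-/

open Filter Set Topology

section Dependence

variable {G : Type*} [CommGroupWithZero G]

theorem exists_zpow_mul_zpow_eq_one_of_sq_eq_zpow {q x y : G} (hq : q ≠ 0) {a b : ℤ}
    (hx : x ^ 2 = q ^ a) (hy : y ^ 2 = q ^ b) :
    ∃ k l : ℤ, (k ≠ 0 ∨ l ≠ 0) ∧ x ^ k * y ^ l = 1 := by
  rcases eq_or_ne a 0 with rfl | ha
  · exact ⟨2, 0, Or.inl two_ne_zero, by simpa using hx⟩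
  · refine ⟨2 * b, -(2 * a), Or.inr (by simpa using ha), ?_⟩
    have hsq : ∀ z : G, ∀ c : ℤ, z ^ (2 * c) = (z ^ 2) ^ c := fun z c => by
      rw [zpow_mul, zpow_ofNat]
    rw [neg_mul_eq_mul_neg, hsq, hsq, hx, hy, ← zpow_mul, ← zpow_mul, mul_neg, mul_comm b a,
      zpow_neg, mul_inv_cancel₀ (zpow_ne_zero _ hq)]

theorem exists_prod_zpow_eq_one_of_sq_eq_zpow {ι : Type*} [Fintype ι] [DecidableEq ι]
    {q : G} (hq : q ≠ 0) {w : ι → G} (hw : ∀ i, ∃ a : ℤ, w i ^ 2 = q ^ a) {i j : ι}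
    (hij : i ≠ j) : ∃ k : ι → ℤ, k ≠ 0 ∧ ∏ l, w l ^ k l = 1 := by
  obtain ⟨a, ha⟩ := hw i
  obtain ⟨b, hb⟩ := hw j
  obtain ⟨ki, kj, hne, hprod⟩ := exists_zpow_mul_zpow_eq_one_of_sq_eq_zpow hq ha hb
  set k : ι → ℤ := Pi.single i ki + Pi.single j kj
  have hki : k i = ki := by simp [k, Pi.single_eq_of_ne hij]
  have hkj : k j = kj := by simp [k, Pi.single_eq_of_ne hij.symm]
  refine ⟨k, fun hk => ?_, ?_⟩
  · rw [← hki, ← hkj, hk] at hne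
    simp at hne
  · rw [Fintype.prod_eq_mul i j hij fun l hl => by simp [k, Pi.single_eq_of_ne hl.1,
      Pi.single_eq_of_ne hl.2], hki, hkj, hprod]

end Dependence

theorem eventually_exists_zpow_dist_lt {y ε : ℝ} (hy : 0 < y) (hε : 0 < ε) :
    ∀ᶠ q in 𝓝[>] (1 : ℝ), ∃ m : ℤ, dist (q ^ m) y < ε := by
  filter_upwards [Ioo_mem_nhdsGT (show 1 < 1 + ε / y by simp [hε, hy])] with q ⟨hq1, hq2⟩
  obtain ⟨m, hm1, hm2⟩ := exists_mem_Ico_zpow hy hq1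
  refine ⟨m, ?_⟩
  rw [dist_comm, Real.dist_eq, abs_of_nonneg (sub_nonneg.2 hm1)]
  calc y - q ^ m < q ^ (m + 1) - q ^ m := by linarith
    _ = q ^ m * (q - 1) := by rw [zpow_add_one₀ (by positivity)]; ring
    _ ≤ y * (q - 1) := by gcongr
    _ < y * (ε / y) := by gcongr; linarith
    _ = ε := by field_simp

theorem eventually_exists_sign_mul_zpow_dist_lt (x : ℝ) {ε : ℝ} (hε : 0 < ε) :
    ∀ᶠ q : ℝ in 𝓝[>] 1, ∃ s m : ℤ, s ^ 2 = 1 ∧ dist (s * q ^ m) x < ε := by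
  filter_upwards [eventually_exists_zpow_dist_lt (y := |x| + ε / 2) (by positivity)
    (half_pos hε)] with q ⟨m, hm⟩
  have habs : dist (q ^ m) |x| < ε :=
    calc dist (q ^ m) |x| ≤ dist (q ^ m) (|x| + ε / 2) + dist (|x| + ε / 2) |x| :=
          dist_triangle _ _ _
      _ < ε / 2 + ε / 2 := by
          refine add_lt_add_of_lt_of_le hm (le_of_eq ?_)
          rw [Real.dist_eq, add_sub_cancel_left, abs_of_pos (half_pos hε)]
      _ = ε := add_halves ε
  rcases lt_or_ge x 0 with hx | hx
  · refine ⟨-1, m, by norm_num, ?_⟩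
    rwa [Int.cast_neg, Int.cast_one, neg_one_mul, ← dist_neg_neg, neg_neg, ← abs_of_neg hx]
  · exact ⟨1, m, one_pow 2, by rwa [Int.cast_one, one_mul, ← abs_of_nonneg hx]⟩

theorem exists_rat_one_lt_of_eventually_nhdsGT {p : ℝ → Prop}
    (h : ∀ᶠ q in 𝓝[>] (1 : ℝ), p q) : ∃ q : ℚ, 1 < q ∧ p q := by
  obtain ⟨u, hu, hsub⟩ := mem_nhdsGT_iff_exists_Ioo_subset.1 h
  obtain ⟨q, hq1, hq2⟩ := exists_rat_btwn (mem_Ioi.1 hu)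
  exact ⟨q, by exact_mod_cast hq1, hsub ⟨hq1, hq2⟩⟩

/-- The multiplicatively dependent vectors with rational coordinates are dense in ℝⁿ. -/
theorem stmt_2 (n : ℕ) (hn : 2 ≤ n) :
    Dense {v : Fin n → ℝ | (∀ i, ∃ q : ℚ, v i = (q : ℝ)) ∧ (∀ i, v i ≠ 0) ∧
      ∃ k : Fin n → ℤ, k ≠ 0 ∧ ∏ i, v i ^ k i = 1} := by
  refine Metric.dense_iff.2 fun v ε hε => ?_
  obtain ⟨q, hq, hnear⟩ := exists_rat_one_lt_of_eventually_nhdsGT <|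
    eventually_all.2 fun i => eventually_exists_sign_mul_zpow_dist_lt (v i) hε
  choose s m hs hdist using hnear
  set w : Fin n → ℚ := fun i => s i * q ^ m i
  have hq0 : q ≠ 0 := by positivity
  have hs' : ∀ i, (s i : ℚ) ^ 2 = 1 := fun i => by exact_mod_cast hs i
  have hw0 : ∀ i, w i ≠ 0 := fun i =>
    mul_ne_zero (fun h => by simpa [h] using hs' i) (zpow_ne_zero _ hq0)
  have hwsq : ∀ i, ∃ a : ℤ, w i ^ 2 = q ^ a := fun i =>
    ⟨m i * 2, by rw [mul_pow, hs' i, one_mul, zpow_mul, zpow_two, sq]⟩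
  obtain ⟨k, hk, hprod⟩ := exists_prod_zpow_eq_one_of_sq_eq_zpow hq0 hwsq
    (i := ⟨0, by omega⟩) (j := ⟨1, by omega⟩) (by simp)
  refine ⟨fun i => w i, (dist_pi_lt_iff hε).2 fun i => by simpa [w] using hdist i,
    fun i => ⟨w i, rfl⟩, fun i => Rat.cast_ne_zero.2 (hw0 i), k, hk, ?_⟩
  simpa using congrArg ((↑) : ℚ → ℝ) hprod
end

section
/- Let n ≥ 2 and let S be a dense subset of ℂ that is closed under powering (for every α ∈ S and non-zero integer m, α^m ∈ S). Then the set of multiplicatively dependent vectors with coordinates in S is dense in ℂⁿ. -/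
/-!
Write a point with `‖z₀‖ ≠ 1` as `z₀ = exp u` with `u.re ≠ 0`, and let `z₁ = exp v`. For a large
prime `q` and an integer `p ≈ q · v.re / u.re` prime to `q`, some `q`-th root
`γ = exp ((u + 2πij) / q)` of `z₀` satisfies `γ ^ p = exp (v + O(1/q))`: the real part is matched
by the choice of `p`, and the imaginary part modulo `2π` by the choice of `j`, since `p` is
invertible modulo `q`. Moving `γ` slightly into `S` and filling the other coordinates with nonzero
points of `S`, the vectors `(γ ^ q, γ ^ p, …)` are multiplicatively dependent, as
`(γ ^ q) ^ p = (γ ^ p) ^ q`, and come arbitrarily close to any point of `ℂⁿ`.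
-/

open Complex
open scoped Real

lemma Real.exists_int_abs_add_two_pi_mul_le (x : ℝ) : ∃ m : ℤ, |x + 2 * π * m| ≤ π := by
  refine ⟨-round (x / (2 * π)), ?_⟩
  have hπ : 0 < 2 * π := by positivity
  calc |x + 2 * π * ((-round (x / (2 * π)) : ℤ) : ℝ)|
      = |x / (2 * π) - round (x / (2 * π))| * (2 * π) := by
        rw [← abs_of_pos hπ, ← abs_mul, abs_of_pos hπ, sub_mul, div_mul_cancel₀ _ hπ.ne']
        push_cast; ring_nf
    _ ≤ 1 / 2 * (2 * π) := by gcongr; exact abs_sub_round _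
    _ = π := by ring

lemma exists_prime_isCoprime_abs_mul_sub_le (ρ : ℝ) (N : ℕ) :
    ∃ (q : ℕ) (p : ℤ), q.Prime ∧ N ≤ q ∧ IsCoprime p q ∧ |q * ρ - p| ≤ 1 := by
  obtain ⟨q, hNq, hq⟩ := Nat.exists_infinite_primes N
  have hq' : Prime (q : ℤ) := Nat.prime_iff_prime_int.mp hq
  set k := ⌊(q : ℝ) * ρ⌋
  have hk := Int.floor_le ((q : ℝ) * ρ)
  have hk' := Int.lt_floor_add_one ((q : ℝ) * ρ)
  by_cases hdvd : (q : ℤ) ∣ k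
  · refine ⟨q, k + 1, hq, hNq, (hq'.coprime_iff_not_dvd.mpr fun h => ?_).symm, ?_⟩
    · exact hq'.not_dvd_one ((Int.dvd_add_right hdvd).mp h)
    · rw [abs_le]; push_cast; constructor <;> linarith
  · refine ⟨q, k, hq, hNq, (hq'.coprime_iff_not_dvd.mpr hdvd).symm, ?_⟩
    rw [abs_le]; constructor <;> linarith

lemma exists_norm_mul_sub_mul_le (u v : ℂ) {p q : ℤ} (h : IsCoprime p q) :
    ∃ j k : ℤ, ‖p * (u + 2 * π * I * j) - q * (v + 2 * π * I * k)‖ ≤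
      |p * u.re - q * v.re| + π := by
  obtain ⟨m, hm⟩ := Real.exists_int_abs_add_two_pi_mul_le (p * u.im - q * v.im)
  obtain ⟨s, t, hst⟩ := h
  refine ⟨m * s, -(m * t), ?_⟩
  have hmst : (m : ℂ) * s * p + m * t * q = m := by
    exact_mod_cast (by linear_combination m * hst : m * s * p + m * t * q = m)
  have key : p * (u + 2 * π * I * (m * s : ℤ)) - q * (v + 2 * π * I * (-(m * t) : ℤ)) =
      ((p * u.re - q * v.re : ℝ) : ℂ) + ((p * u.im - q * v.im + 2 * π * m : ℝ) : ℂ) * I := by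
    push_cast
    linear_combination (re_add_im u).symm * p - (re_add_im v).symm * q + 2 * π * I * hmst
  rw [key]
  refine (norm_add_le _ _).trans (add_le_add ?_ ?_)
  · rw [norm_real, Real.norm_eq_abs]
  · rw [norm_mul, norm_I, mul_one, norm_real, Real.norm_eq_abs]; exact hm

lemma Complex.norm_exp_add_sub_exp_le (v : ℂ) {x : ℂ} (hx : ‖x‖ ≤ 1) :
    ‖exp (v + x) - exp v‖ ≤ 2 * ‖exp v‖ * ‖x‖ := by
  rw [exp_add, ← mul_sub_one, norm_mul, mul_assoc, mul_left_comm]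
  exact mul_le_mul_of_nonneg_left (norm_exp_sub_one_le hx) (norm_nonneg _)

lemma exists_zpow_eq_exp_and_norm_zpow_sub_exp_lt (u v : ℂ) (hu : u.re ≠ 0) {ε : ℝ}
    (hε : 0 < ε) : ∃ (γ : ℂ) (a b : ℤ), a ≠ 0 ∧ b ≠ 0 ∧ γ ^ a = exp u ∧ ‖γ ^ b - exp v‖ < ε := by
  set C := |u.re| + π
  obtain ⟨N, hN⟩ := exists_nat_gt (max C (2 * ‖exp v‖ * C / ε))
  obtain ⟨q, p, hq, hNq, hpq, happrox⟩ := exists_prime_isCoprime_abs_mul_sub_le (v.re / u.re) N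
  obtain ⟨j, k, hjk⟩ := exists_norm_mul_sub_mul_le u v hpq
  push_cast at hjk
  set w : ℂ := p * (u + 2 * π * I * j) - q * (v + 2 * π * I * k)
  have hNq' : (N : ℝ) ≤ q := by exact_mod_cast hNq
  have hq0 : (0 : ℝ) < q := by exact_mod_cast hq.pos
  have hqC : C / q ≤ 1 := (div_le_one hq0).mpr ((le_max_left _ _).trans (hN.trans_le hNq').le)
  have hq0' : (q : ℂ) ≠ 0 := by exact_mod_cast hq.ne_zero
  have hwC : ‖w / q‖ ≤ C / q := by
    have hre : |p * u.re - q * v.re| ≤ |u.re| := by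
      calc |p * u.re - q * v.re| = |q * (v.re / u.re) - p| * |u.re| := by
            rw [← abs_mul, ← abs_neg]; congr 1; field_simp; ring
        _ ≤ |u.re| := mul_le_of_le_one_left (abs_nonneg _) happrox
    rw [norm_div, norm_natCast]
    gcongr
    linarith
  have hε' : 2 * ‖exp v‖ * (C / q) < ε := by
    have h := (le_max_right _ _).trans_lt (hN.trans_le hNq')
    rw [div_lt_iff₀ hε] at h
    rw [← mul_div_assoc, div_lt_iff₀ hq0]
    linarith
  refine ⟨exp ((u + 2 * π * I * j) / q), q, p, by exact_mod_cast hq.ne_zero, ?_, ?_, ?_⟩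
  · rintro rfl
    exact hq.one_lt.ne' (by simpa using Int.isUnit_iff_natAbs_eq.mp (isCoprime_zero_left.mp hpq))
  · have hγq : ((q : ℤ) : ℂ) * ((u + 2 * π * I * j) / q) = u + j * (2 * π * I) := by
      push_cast; field_simp
    rw [← exp_int_mul, hγq, Complex.exp_add, exp_int_mul_two_pi_mul_I, mul_one]
  · have hγp : p * ((u + 2 * π * I * j) / q) = v + w / q + k * (2 * π * I) := by
      simp only [w]; field_simp; ring
    rw [← exp_int_mul, hγp, exp_add, exp_int_mul_two_pi_mul_I, mul_one]
    calc ‖exp (v + w / q) - exp v‖ ≤ 2 * ‖exp v‖ * ‖w / q‖ :=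
          norm_exp_add_sub_exp_le v (hwC.trans hqC)
      _ ≤ 2 * ‖exp v‖ * (C / q) := by gcongr
      _ < ε := hε'

def zpowPairs {G₀ : Type*} [GroupWithZero G₀] (S : Set G₀) : Set (G₀ × G₀) :=
  {x | ∃ γ ∈ S, γ ≠ 0 ∧ ∃ a b : ℤ, a ≠ 0 ∧ b ≠ 0 ∧ x = (γ ^ a, γ ^ b)}

lemma zpowPairs_univ_subset_closure {G₀ : Type*} [GroupWithZero G₀] [TopologicalSpace G₀]
    [T1Space G₀] [ContinuousInv₀ G₀] [ContinuousMul G₀] {S : Set G₀} (hS : Dense S) :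
    zpowPairs Set.univ ⊆ closure (zpowPairs S) := by
  rintro _ ⟨γ, -, hγ, a, b, ha, hb, rfl⟩
  have hcont : ContinuousAt (fun z : G₀ => (z ^ a, z ^ b)) γ :=
    (continuousAt_zpow₀ γ a (.inl hγ)).prodMk (continuousAt_zpow₀ γ b (.inl hγ))
  have hγS : γ ∈ closure (S ∩ {0}ᶜ) := by
    simpa [Set.inter_comm] using isOpen_compl_singleton.inter_closure ⟨hγ, hS γ⟩
  refine closure_mono ?_ (mem_closure_image (f := fun z : G₀ => (z ^ a, z ^ b)) hcont hγS)
  rintro _ ⟨z, ⟨hzS, hz⟩, rfl⟩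
  exact ⟨z, hzS, hz, a, b, ha, hb, rfl⟩

lemma exp_prodMap_subset_closure_zpowPairs_univ :
    Prod.map exp exp '' {x : ℂ × ℂ | x.1.re ≠ 0} ⊆ closure (zpowPairs Set.univ) := by
  rintro _ ⟨⟨u, v⟩, hu, rfl⟩
  rw [Metric.mem_closure_iff]
  intro ε hε
  obtain ⟨γ, a, b, ha, hb, hγa, hγb⟩ := exists_zpow_eq_exp_and_norm_zpow_sub_exp_lt u v hu hε
  have hγ : γ ≠ 0 := by
    rintro rfl
    exact exp_ne_zero u (hγa.symm.trans (zero_zpow a ha))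
  refine ⟨(γ ^ a, γ ^ b), ⟨γ, Set.mem_univ _, hγ, a, b, ha, hb, rfl⟩, ?_⟩
  rw [Prod.dist_eq, max_lt_iff]
  exact ⟨by simpa [hγa] using hε, by simpa [dist_eq, norm_sub_rev] using hγb⟩

lemma Complex.dense_zpowPairs {S : Set ℂ} (hS : Dense S) : Dense (zpowPairs S) := by
  have hexp : DenseRange (Prod.map exp exp) := by
    rw [DenseRange, Set.range_prodMap, range_exp]
    exact (dense_compl_singleton 0).prod (dense_compl_singleton 0)
  have hre : Dense {x : ℂ × ℂ | x.1.re ≠ 0} :=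
    ((dense_compl_singleton (0 : ℝ)).preimage isOpenMap_re).preimage isOpenMap_fst
  have hD := hexp.dense_image (continuous_exp.prodMap continuous_exp) hre
  refine dense_closure.mp (hD.mono (exp_prodMap_subset_closure_zpowPairs_univ.trans ?_))
  simpa using closure_mono (zpowPairs_univ_subset_closure hS)

lemma dense_setOf_pair_mem_and_forall_ne_mem {ι X : Type*} [TopologicalSpace X]
    {A : Set (X × X)} {B : Set X} (hA : Dense A) (hB : Dense B) {i j : ι} (hij : i ≠ j) :
    Dense {v : ι → X | (v i, v j) ∈ A ∧ ∀ l, l ≠ i → l ≠ j → v l ∈ B} := by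
  classical
  let Φ : (X × X) × (ι → X) → ι → X := fun x =>
    Function.update (Function.update x.2 i x.1.1) j x.1.2
  have hΦ : Continuous Φ := by fun_prop
  have hsurj : Function.Surjective Φ := fun v => ⟨((v i, v j), v), by simp [Φ]⟩
  refine (hsurj.denseRange.dense_image hΦ (hA.prod (dense_pi Set.univ fun _ _ => hB))).mono ?_
  rintro _ ⟨⟨⟨x, y⟩, s⟩, ⟨hxy, hs⟩, rfl⟩
  exact ⟨by simpa [Φ, hij] using hxy, fun l hli hlj => by simpa [Φ, hli, hlj] using hs l trivial⟩

lemma exists_prod_zpow_eq_one_of_zpow_eq {ι G₀ : Type*} [Fintype ι] [CommGroupWithZero G₀]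
    {v : ι → G₀} {i j : ι} (hij : i ≠ j) {a b : ℤ} (ha : a ≠ 0) (hj : v j ≠ 0)
    (h : v i ^ b = v j ^ a) : ∃ k : ι → ℤ, k ≠ 0 ∧ ∏ l, v l ^ k l = 1 := by
  classical
  refine ⟨Pi.single i b - Pi.single j a, fun hk => ha ?_, ?_⟩
  · simpa [hij.symm] using congrFun hk j
  · rw [Fintype.prod_eq_mul i j hij fun l hl => by simp [hl.1, hl.2]]
    simp [hij, hij.symm, h, zpow_neg, mul_inv_cancel₀ (zpow_ne_zero a hj)]

/-- If `S` is dense in ℂ and closed under powering, then the multiplicatively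
dependent vectors with coordinates in `S` are dense in ℂⁿ. -/
theorem stmt_3 (n : ℕ) (hn : 2 ≤ n) (S : Set ℂ) (hS : Dense S)
    (hpow : ∀ α ∈ S, ∀ m : ℤ, m ≠ 0 → α ^ m ∈ S) :
    Dense {v : Fin n → ℂ | (∀ i, v i ∈ S) ∧ (∀ i, v i ≠ 0) ∧
      ∃ k : Fin n → ℤ, k ≠ 0 ∧ ∏ i, v i ^ k i = 1} := by
  set i₀ : Fin n := ⟨0, by omega⟩
  set i₁ : Fin n := ⟨1, by omega⟩
  have hi : i₀ ≠ i₁ := by simp [i₀, i₁, Fin.ext_iff]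
  refine (dense_setOf_pair_mem_and_forall_ne_mem (Complex.dense_zpowPairs hS)
    (hS.sdiff_singleton 0) hi).mono ?_
  rintro v ⟨⟨γ, hγS, hγ, a, b, ha, hb, hv⟩, hrest⟩
  simp only [Prod.mk.injEq] at hv
  have hmem : ∀ l, v l ∈ S \ {0} := by
    intro l
    by_cases h₀ : l = i₀
    · rw [h₀, hv.1]; exact ⟨hpow γ hγS a ha, zpow_ne_zero a hγ⟩
    by_cases h₁ : l = i₁
    · rw [h₁, hv.2]; exact ⟨hpow γ hγS b hb, zpow_ne_zero b hγ⟩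
    exact hrest l h₀ h₁
  refine ⟨fun l => (hmem l).1, fun l => (hmem l).2,
    exists_prod_zpow_eq_one_of_zpow_eq (b := b) hi ha (hmem i₁).2 ?_⟩
  rw [hv.1, hv.2, ← zpow_mul, ← zpow_mul, mul_comm]
end

section
/- Let n ≥ 2 and let K be a subfield of ℂ that is not contained in ℝ. Then the set of multiplicatively dependent vectors with coordinates in K is dense in ℂⁿ. -/
/-!
A vector `(t ^ q, t ^ p, u₃, …, uₙ)` with `t, uᵢ ∈ K ∖ {0}` is multiplicatively dependent, since
`(t ^ q) ^ p * (t ^ p) ^ (-q) = 1`. As `K` is dense and powers are continuous, it suffices that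
the pairs `(t ^ q, t ^ p)`, `t ∈ ℂˣ`, are dense in `ℂ²`. Approximate a target `(exp z₀, exp z₁)`
with `Re z₀ ≠ 0` by `t = exp ((z₀ + 2πij) / q)`, so that `t ^ q = exp z₀` exactly: take `q` a large
prime and `p` coprime to `q` with `p / q ≈ Re z₁ / Re z₀`; since `pj` runs through all residues
mod `q`, `j` can be chosen so that `p (z₀ + 2πij) / q` lies within `(|Re z₀| + π) / q` of
`z₁ + 2πiℤ`.
-/

open Complex Function Set
open scoped Real

lemma exists_isCoprime_abs_sub_le_one (x : ℝ) (N : ℕ) :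
    ∃ q : ℕ, N < q ∧ ∃ p : ℤ, IsCoprime (q : ℤ) p ∧ |p - q * x| ≤ 1 := by
  obtain ⟨q, hNq, hq⟩ := Nat.exists_infinite_primes (N + 1)
  have hq' : Prime (q : ℤ) := Nat.prime_iff_prime_int.mp hq
  refine ⟨q, hNq, ?_⟩
  have ha : (⌊(q : ℝ) * x⌋ : ℝ) ≤ q * x := Int.floor_le _
  have ha' : q * x < ⌊(q : ℝ) * x⌋ + 1 := Int.lt_floor_add_one _
  by_cases hdvd : (q : ℤ) ∣ ⌊(q : ℝ) * x⌋
  · refine ⟨⌊(q : ℝ) * x⌋ + 1, hq'.coprime_iff_not_dvd.2 fun h => hq'.not_dvd_one ?_, ?_⟩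
    · exact (dvd_add_right hdvd).1 h
    · push_cast
      rw [abs_le]
      constructor <;> linarith
  · refine ⟨_, hq'.coprime_iff_not_dvd.2 hdvd, ?_⟩
    rw [abs_le]
    constructor <;> linarith

lemma IsCoprime.exists_abs_mul_sub_mul_sub_le {q p : ℤ} (h : IsCoprime q p) (c : ℝ) :
    ∃ j m : ℤ, |((p * j - q * m : ℤ) : ℝ) - c| ≤ 1 / 2 := by
  obtain ⟨a, b, hab⟩ := h
  refine ⟨round c * b, -(round c * a), ?_⟩
  rw [show p * (round c * b) - q * -(round c * a) = round c by linear_combination round c * hab,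
    abs_sub_comm]
  exact abs_sub_round c

lemma exists_mul_div_sub_near {z₀ : ℂ} (h : z₀.re ≠ 0) (z₁ : ℂ) {δ : ℝ} (hδ : 0 < δ) :
    ∃ (q : ℕ) (p j m : ℤ), 0 < q ∧
      ‖p * ((z₀ + j * (2 * π * I)) / q) - m * (2 * π * I) - z₁‖ < δ := by
  obtain ⟨q, hq, p, hcop, hp⟩ :=
    exists_isCoprime_abs_sub_le_one (z₁.re / z₀.re) ⌈(|z₀.re| + π) / δ⌉₊
  obtain ⟨j, m, hjm⟩ := hcop.exists_abs_mul_sub_mul_sub_le ((q * z₁.im - p * z₀.im) / (2 * π))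
  have hq₀ : (0 : ℝ) < q := by exact_mod_cast (Nat.zero_le _).trans_lt hq
  refine ⟨q, p, j, m, by exact_mod_cast hq₀, ?_⟩
  set x : ℝ := z₀.re / q * (p - q * (z₁.re / z₀.re))
  set y : ℝ := 2 * π / q * ((p * j - q * m : ℤ) - (q * z₁.im - p * z₀.im) / (2 * π))
  have hxy : p * ((z₀ + j * (2 * π * I)) / q) - m * (2 * π * I) - z₁ = x + y * I := by
    apply Complex.ext
    · simp [x, -ofReal_mul, -ofReal_sub]
      field_simp
    · simp [y, -ofReal_mul, -ofReal_sub, -ofReal_div]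
      field_simp
      ring
  have hx : |x| ≤ |z₀.re| / q := by
    rw [abs_mul, abs_div, abs_of_pos hq₀]
    exact mul_le_of_le_one_right (by positivity) hp
  have hy : |y| ≤ π / q := by
    rw [abs_mul, abs_of_pos (by positivity)]
    calc 2 * π / q * _ ≤ 2 * π / q * (1 / 2) := by gcongr
      _ = π / q := by ring
  have hqδ : (|z₀.re| + π) / δ < q := (Nat.le_ceil _).trans_lt (by exact_mod_cast hq)
  calc ‖p * ((z₀ + j * (2 * π * I)) / q) - m * (2 * π * I) - z₁‖ ≤ |x| + |y| := by
        simpa [hxy] using norm_le_abs_re_add_abs_im (x + y * I)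
    _ ≤ (|z₀.re| + π) / q := by rw [add_div]; exact add_le_add hx hy
    _ < δ := by rwa [div_lt_iff₀ hq₀, mul_comm, ← div_lt_iff₀ hδ]

def powPairs (s : Set ℂ) : Set (ℂ × ℂ) :=
  {x | ∃ t ∈ s, t ≠ 0 ∧ ∃ q : ℕ, 0 < q ∧ ∃ p : ℤ, x = (t ^ q, t ^ p)}

lemma exp_mem_closure_powPairs_univ {z₀ : ℂ} (h : z₀.re ≠ 0) (z₁ : ℂ) :
    (exp z₀, exp z₁) ∈ closure (powPairs univ) := by
  refine Metric.mem_closure_iff.2 fun ε hε => ?_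
  obtain ⟨δ, hδ, hexp⟩ := Metric.continuous_iff.1 continuous_exp z₁ ε hε
  obtain ⟨q, p, j, m, hq, hnear⟩ := exists_mul_div_sub_near h z₁ hδ
  set ζ := (z₀ + j * (2 * π * I)) / q
  refine ⟨(exp ζ ^ q, exp ζ ^ p), ⟨exp ζ, mem_univ _, exp_ne_zero _, q, hq, p, rfl⟩, ?_⟩
  have h₀ : exp ζ ^ q = exp z₀ := by
    rw [← exp_nat_mul, mul_div_cancel₀ _ (by exact_mod_cast hq.ne'), exp_add,
      exp_int_mul_two_pi_mul_I, mul_one]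
  have h₁ : exp ζ ^ p = exp (p * ζ - m * (2 * π * I)) := by
    rw [exp_sub, exp_int_mul_two_pi_mul_I, div_one, exp_int_mul]
  rw [Prod.dist_eq, h₀, h₁, dist_self, max_eq_right dist_nonneg, dist_comm]
  exact hexp _ (by rwa [dist_eq])

lemma dense_powPairs_univ : Dense (powPairs univ) := by
  have hexp : DenseRange exp := by rw [DenseRange, range_exp]; exact dense_compl_singleton 0
  have hre : Dense {z : ℂ | z.re ≠ 0} := (dense_compl_singleton (0 : ℝ)).preimage isOpenMap_re
  refine Dense.of_closure (((hexp.dense_image continuous_exp hre).prod hexp).mono ?_)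
  rintro ⟨_, _⟩ ⟨⟨z₀, hz₀, rfl⟩, z₁, rfl⟩
  exact exp_mem_closure_powPairs_univ hz₀ z₁

lemma powPairs_univ_subset_closure {s : Set ℂ} (hs : Dense s) :
    powPairs univ ⊆ closure (powPairs s) := by
  rintro _ ⟨t, -, ht, q, hq, p, rfl⟩
  refine mem_closure_iff_nhds.2 fun U hU => ?_
  have hcont : ContinuousAt (fun u : ℂ => (u ^ q, u ^ p)) t :=
    (continuous_pow q).continuousAt.prodMk (continuousAt_zpow₀ t p (Or.inl ht))
  obtain ⟨u, ⟨hus, hu⟩, huU⟩ := (hs.sdiff_singleton 0).inter_nhds_nonempty (hcont hU)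
  exact ⟨_, huU, u, hus, hu, q, hq, p, rfl⟩

lemma dense_powPairs {s : Set ℂ} (hs : Dense s) : Dense (powPairs s) :=
  Dense.of_closure (dense_powPairs_univ.mono (powPairs_univ_subset_closure hs))

lemma Subfield.dense_of_not_subset_real (K : Subfield ℂ)
    (hK : ¬ (K : Set ℂ) ⊆ {z | z.im = 0}) : Dense (K : Set ℂ) := by
  obtain ⟨z, hzK, hz⟩ := not_subset.1 hK
  have hz : z.im ≠ 0 := hz
  let f : ℝ × ℝ → ℂ := fun x => x.1 + x.2 * z
  have hf : Surjective f := fun w =>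
    ⟨(w.re - w.im / z.im * z.re, w.im / z.im), by apply Complex.ext <;> simp [f, hz]⟩
  have hrange : DenseRange (f ∘ Prod.map ((↑) : ℚ → ℝ) ((↑) : ℚ → ℝ)) :=
    hf.denseRange.comp (Rat.denseRange_cast.prodMap Rat.denseRange_cast) (by fun_prop)
  refine hrange.mono ?_
  rintro _ ⟨⟨a, b⟩, rfl⟩
  simpa [f] using
    add_mem (SubfieldClass.ratCast_mem K a) (mul_mem (SubfieldClass.ratCast_mem K b) hzK)

def IsMulDependent {ι G : Type*} [Fintype ι] [CommGroupWithZero G] (v : ι → G) : Prop :=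
  (∀ i, v i ≠ 0) ∧ ∃ k : ι → ℤ, k ≠ 0 ∧ ∏ i, v i ^ k i = 1

lemma isMulDependent_update_update_pow {ι G : Type*} [Fintype ι] [DecidableEq ι]
    [CommGroupWithZero G] {u : ι → G} (hu : ∀ i, u i ≠ 0) {i₀ i₁ : ι} (hi : i₀ ≠ i₁)
    {t : G} (ht : t ≠ 0) {q : ℕ} (hq : q ≠ 0) (p : ℤ) :
    IsMulDependent (update (update u i₀ (t ^ q)) i₁ (t ^ p)) := by
  refine ⟨fun i => ?_, update (update 0 i₀ p) i₁ (-q), fun hk => hq ?_, ?_⟩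
  · simp only [update_apply]
    split_ifs <;> simp [ht, hu, zpow_ne_zero]
  · simpa using congrFun hk i₁
  · rw [Finset.prod_eq_mul i₀ i₁ hi (fun c _ hc => by simp [hc.1, hc.2]) (by simp) (by simp)]
    simp only [update_self, update_of_ne hi, ← zpow_natCast, ← zpow_mul, zpow_neg, mul_comm]
    exact mul_inv_cancel₀ (zpow_ne_zero _ ht)

lemma dense_image_update_update {ι X : Type*} [TopologicalSpace X] [DecidableEq ι]
    {s : Set X} {P : Set (X × X)} (hs : Dense s) (hP : Dense P) (i₀ i₁ : ι) :
    Dense ((fun y : (ι → X) × (X × X) => update (update y.1 i₀ y.2.1) i₁ y.2.2) ''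
      ((univ.pi fun _ => s) ×ˢ P)) := by
  refine DenseRange.dense_image (Surjective.denseRange fun v => ⟨(v, v i₀, v i₁), ?_⟩)
    (by fun_prop) ((dense_pi univ fun _ _ => hs).prod hP)
  simp

/-- If `K` is a subfield of ℂ not contained in ℝ, then the multiplicatively
dependent vectors with coordinates in `K` are dense in ℂⁿ. -/
theorem stmt_4 (n : ℕ) (hn : 2 ≤ n) (K : Subfield ℂ)
    (hK : ¬ (K : Set ℂ) ⊆ {z : ℂ | z.im = 0}) :
    Dense {v : Fin n → ℂ | (∀ i, v i ∈ K) ∧ (∀ i, v i ≠ 0) ∧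
      ∃ k : Fin n → ℤ, k ≠ 0 ∧ ∏ i, v i ^ k i = 1} := by
  have hKd := K.dense_of_not_subset_real hK
  let i₀ : Fin n := ⟨0, by omega⟩
  let i₁ : Fin n := ⟨1, by omega⟩
  have hi : i₀ ≠ i₁ := by simp [i₀, i₁, Fin.ext_iff]
  refine (dense_image_update_update (hKd.sdiff_singleton 0) (dense_powPairs hKd) i₀ i₁).mono ?_
  rintro _ ⟨⟨u, _⟩, ⟨hu, t, htK, ht, q, hq, p, rfl⟩, rfl⟩
  refine ⟨fun i => ?_, isMulDependent_update_update_pow (fun i => (hu i trivial).2) hi ht hq.ne' p⟩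
  simp only [update_apply]
  split_ifs
  exacts [zpow_mem htK p, pow_mem htK q, (hu i trivial).1]
end

section
/- Let α and β be complex numbers not in ℝ such that 1, α, β are linearly independent over ℚ and ℚ(α,β) ∩ ℝ = ℚ. Then the set S_{α,β} = { a + bα + cβ : a, b, c ∈ ℤ } is dense in ℂ. -/
/-!
No two ℚ-independent elements of `ℚ + ℚα + ℚβ` lie on a common real line `ℝ v`: their ratio
would be a real, hence rational, element of `ℚ(α, β)`. So for every `v ≠ 0` the values
`Im (z / v)`, `z ∈ S = ℤ + ℤα + ℤβ`, form a non-cyclic and therefore dense subgroup of `ℝ`.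
For `v = 1` this puts infinitely many points of `S` in a bounded strip, so `0` is not isolated
in `S` and the closure of `S` contains a line `ℝ v`. Adding that line to `S` and using the
density of `Im (S / v)` reaches every point of `ℂ`.
-/

open Filter Topology Set

theorem tendsto_floor_div_mul {ι : Type*} {l : Filter ι} {x : ι → ℝ} (hx0 : ∀ i, 0 < x i)
    (hx : Tendsto x l (𝓝 0)) (t : ℝ) :
    Tendsto (fun i => (⌊t / x i⌋ : ℝ) * x i) l (𝓝 t) := by
  have hlow : ∀ i, t - x i ≤ ⌊t / x i⌋ * x i := fun i => by
    have := Int.lt_floor_add_one (t / x i)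
    rw [div_lt_iff₀ (hx0 i)] at this
    linarith
  have hup : ∀ i, ⌊t / x i⌋ * x i ≤ t := fun i => (le_div_iff₀ (hx0 i)).1 (Int.floor_le _)
  refine tendsto_of_tendsto_of_tendsto_of_le_of_le ?_ tendsto_const_nhds hlow hup
  simpa using tendsto_const_nhds.sub hx

section NormedAddCommGroup

variable {E : Type*} [NormedAddCommGroup E] [ProperSpace E]

theorem AddSubgroup.exists_ne_zero_norm_lt_of_infinite_inter (G : AddSubgroup E) {K : Set E}
    (hK : Bornology.IsBounded K) (hinf : (K ∩ G).Infinite) {ε : ℝ} (hε : 0 < ε) :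
    ∃ g ∈ G, g ≠ 0 ∧ ‖g‖ < ε := by
  by_contra! h
  have : DiscreteTopology G := by
    rw [discreteTopology_iff_isOpen_singleton_zero, Metric.isOpen_singleton_iff]
    refine ⟨ε, hε, fun g hg => ?_⟩
    by_contra hne
    exact (h g g.2 (by simpa using hne)).not_gt (by simpa using hg)
  exact hinf (Metric.finite_isBounded_inter_isClosed (isDiscrete_iff_discreteTopology.mpr this) hK
    AddSubgroup.isClosed_of_discrete)

theorem AddSubgroup.exists_forall_smul_mem_of_isClosed [NormedSpace ℝ E] {H : AddSubgroup E}
    (hH : IsClosed (H : Set E)) (hsmall : ∀ ε > 0, ∃ h ∈ H, h ≠ 0 ∧ ‖h‖ < ε) :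
    ∃ v : E, v ≠ 0 ∧ ∀ t : ℝ, t • v ∈ H := by
  choose d hdH hd0 hdlt using fun n : ℕ => hsmall (1 / (n + 1)) Nat.one_div_pos_of_nat
  have hnorm0 : ∀ n, 0 < ‖d n‖ := fun n => norm_pos_iff.2 (hd0 n)
  have hsphere : ∀ n, ‖d n‖⁻¹ • d n ∈ Metric.sphere (0 : E) 1 := fun n => by
    simp [norm_smul, (hnorm0 n).ne']
  obtain ⟨v, hv, φ, hφ, hvlim⟩ := (isCompact_sphere (0 : E) 1).tendsto_subseq hsphere
  refine ⟨v, ne_zero_of_mem_unit_sphere ⟨v, hv⟩, fun t => ?_⟩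
  have hdlim : Tendsto (fun n => ‖d (φ n)‖) atTop (𝓝 0) :=
    (squeeze_zero (fun n => norm_nonneg _) (fun n => (hdlt n).le)
      tendsto_one_div_add_atTop_nhds_zero_nat).comp hφ.tendsto_atTop
  -- `⌊t / ‖d‖⌋ • d → t • v` along the subsequence
  refine hH.mem_of_tendsto ((tendsto_floor_div_mul (fun n => hnorm0 _) hdlim t).smul hvlim)
    (Eventually.of_forall fun n => ?_)
  rw [Function.comp_apply, smul_smul, mul_assoc, mul_inv_cancel₀ (hnorm0 _).ne', mul_one,
    Int.cast_smul_eq_zsmul]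
  exact H.zsmul_mem (hdH _) _

end NormedAddCommGroup

theorem AddSubgroup.exists_rat_eq_mul_of_mem_zmultiples {F : Type*} [Field F] [CharZero F]
    {a x y : F} (hx : x ∈ AddSubgroup.zmultiples a) (hy : y ∈ AddSubgroup.zmultiples a)
    (hx0 : x ≠ 0) : ∃ q : ℚ, y = q * x := by
  obtain ⟨m, rfl⟩ := hx
  obtain ⟨n, rfl⟩ := hy
  have hm : (m : F) ≠ 0 := by
    rintro h
    simp_all
  refine ⟨n / m, ?_⟩
  simp only [zsmul_eq_mul, Rat.cast_div, Rat.cast_intCast]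
  field_simp

theorem LinearIndependent.eq_zero_of_ratCast_add_mul_add_mul {F : Type*} [Field F] [CharZero F]
    {x y : F} (hli : LinearIndependent ℚ ![1, x, y]) {a b c : ℚ}
    (h : (a : F) + b * x + c * y = 0) : a = 0 ∧ b = 0 ∧ c = 0 := by
  have := Fintype.linearIndependent_iff.mp hli ![a, b, c]
    (by simpa [Fin.sum_univ_three, Rat.smul_def] using h)
  exact ⟨this 0, this 1, this 2⟩

/-- For `v ≠ 0`, the projection of `ℂ` onto `ℝ` along the line `ℝ v`. -/
noncomputable def imDiv (v : ℂ) : ℂ →+ ℝ :=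
  AddMonoidHom.mk' (fun z => (z / v).im) fun z w => by simp [add_div]

@[simp]
theorem imDiv_apply (v z : ℂ) : imDiv v z = (z / v).im := rfl

theorem imDiv_ratCast_mul (v z : ℂ) (q : ℚ) : imDiv v (q * z) = q * imDiv v z := by
  rw [imDiv_apply, imDiv_apply, mul_div_assoc, ← Complex.ofReal_ratCast, Complex.im_ofReal_mul]

theorem dense_of_forall_smul_mem_of_dense_map_imDiv {H : AddSubgroup ℂ} {v : ℂ} (hv : v ≠ 0)
    (hline : ∀ t : ℝ, t • v ∈ H) (hdense : Dense (H.map (imDiv v) : Set ℝ)) :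
    Dense (H : Set ℂ) := by
  intro z
  refine Metric.mem_closure_iff.2 fun ε hε => ?_
  obtain ⟨_, ⟨s, hs, rfl⟩, hdist⟩ :=
    Metric.mem_closure_iff.1 (hdense (imDiv v z)) (ε / ‖v‖) (by positivity)
  set w := (z - s) / v with hw
  refine ⟨s + w.re • v, H.add_mem hs (hline _), ?_⟩
  have hdecomp : z - (s + w.re • v) = v * (w.im * Complex.I) := by
    have hzs : z - s = v * w := by rw [hw]; field_simp
    rw [Complex.real_smul, sub_add_eq_sub_sub, hzs]
    linear_combination -v * Complex.re_add_im w
  have hwim : w.im = imDiv v z - imDiv v s := by simp [hw, sub_div]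
  rw [Complex.dist_eq, hdecomp, norm_mul, norm_mul, Complex.norm_I, mul_one, Complex.norm_real,
    hwim, ← dist_eq_norm, ← lt_div_iff₀' (norm_pos_iff.2 hv)]
  exact hdist

theorem exists_rat_eq_mul_of_imDiv_eq_zero {K : Subfield ℂ}
    (hK : ∀ z ∈ K, z.im = 0 → ∃ q : ℚ, z = q) {v u w : ℂ} (hv : v ≠ 0) (hu : u ∈ K) (hw : w ∈ K)
    (hu0 : u ≠ 0) (hvu : imDiv v u = 0) (hvw : imDiv v w = 0) : ∃ q : ℚ, w = q * u := by
  have him : (w / u).im = 0 := by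
    rw [show w / u = (w / v) / (u / v) by field_simp, Complex.div_im]
    simp_all
  obtain ⟨q, hq⟩ := hK _ (div_mem hw hu) him
  exact ⟨q, by rw [← hq, div_mul_cancel₀ _ hu0]⟩

def intSpan (α β : ℂ) : AddSubgroup ℂ where
  carrier := {z | ∃ a b c : ℤ, z = a + b * α + c * β}
  zero_mem' := ⟨0, 0, 0, by simp⟩
  add_mem' := by
    rintro _ _ ⟨a, b, c, rfl⟩ ⟨a', b', c', rfl⟩
    exact ⟨a + a', b + b', c + c', by push_cast; ring⟩
  neg_mem' := by
    rintro _ ⟨a, b, c, rfl⟩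
    exact ⟨-a, -b, -c, by push_cast; ring⟩

section intSpan

variable {α β : ℂ}

theorem one_mem_intSpan : 1 ∈ intSpan α β := ⟨1, 0, 0, by simp⟩

theorem left_mem_intSpan : α ∈ intSpan α β := ⟨0, 1, 0, by simp⟩

theorem right_mem_intSpan : β ∈ intSpan α β := ⟨0, 0, 1, by simp⟩

theorem dense_map_imDiv_intSpan (hli : LinearIndependent ℚ ![(1 : ℂ), α, β])
    (hfield : ∀ z ∈ Subfield.closure {α, β}, z.im = 0 → ∃ q : ℚ, z = (q : ℂ)) {v : ℂ}
    (hv : v ≠ 0) : Dense ((intSpan α β).map (imDiv v) : Set ℝ) := by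
  set K := Subfield.closure {α, β}
  have hαK : α ∈ K := Subfield.subset_closure (by simp)
  have hβK : β ∈ K := Subfield.subset_closure (by simp)
  refine (AddSubgroup.dense_or_cyclic _).resolve_right ?_
  rintro ⟨a, ha⟩
  have hcyc : ∀ u ∈ intSpan α β, imDiv v u ∈ AddSubgroup.zmultiples a := fun u hu => by
    rw [AddSubgroup.zmultiples_eq_closure, ← ha]
    exact AddSubgroup.mem_map_of_mem _ hu
  by_cases h1 : imDiv v 1 = 0
  · -- `v` is real, so the real line `ℝ v` meets `ℚ(α, β)` in `ℚ`
    have hα0 : imDiv v α ≠ 0 := fun hα => by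
      obtain ⟨q, hq⟩ := exists_rat_eq_mul_of_imDiv_eq_zero hfield hv K.one_mem hαK one_ne_zero h1 hα
      exact one_ne_zero (hli.eq_zero_of_ratCast_add_mul_add_mul (a := -q) (b := 1) (c := 0)
        (by rw [hq]; push_cast; ring)).2.1
    obtain ⟨q, hq⟩ := AddSubgroup.exists_rat_eq_mul_of_mem_zmultiples (hcyc α left_mem_intSpan)
      (hcyc β right_mem_intSpan) hα0
    obtain ⟨r, hr⟩ := exists_rat_eq_mul_of_imDiv_eq_zero hfield hv K.one_mem
      (sub_mem hβK (mul_mem (SubfieldClass.ratCast_mem K q) hαK)) one_ne_zero h1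
      (by rw [map_sub, imDiv_ratCast_mul, hq, sub_self])
    exact one_ne_zero (hli.eq_zero_of_ratCast_add_mul_add_mul (a := -r) (b := -q) (c := 1)
      (by push_cast; linear_combination hr)).2.2
  · -- `α - q₁` and `β - q₂` both lie on `ℝ v`
    obtain ⟨q₁, hq₁⟩ := AddSubgroup.exists_rat_eq_mul_of_mem_zmultiples
      (hcyc 1 one_mem_intSpan) (hcyc α left_mem_intSpan) h1
    obtain ⟨q₂, hq₂⟩ := AddSubgroup.exists_rat_eq_mul_of_mem_zmultiples
      (hcyc 1 one_mem_intSpan) (hcyc β right_mem_intSpan) h1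
    have hα₁ : α - q₁ ≠ 0 := fun h => one_ne_zero
      (hli.eq_zero_of_ratCast_add_mul_add_mul (a := -q₁) (b := 1) (c := 0)
        (by push_cast; linear_combination h)).2.1
    obtain ⟨r, hr⟩ := exists_rat_eq_mul_of_imDiv_eq_zero hfield hv
      (sub_mem hαK (SubfieldClass.ratCast_mem K q₁)) (sub_mem hβK (SubfieldClass.ratCast_mem K q₂))
      hα₁ (by rw [map_sub, ← mul_one (q₁ : ℂ), imDiv_ratCast_mul, hq₁, sub_self])
      (by rw [map_sub, ← mul_one (q₂ : ℂ), imDiv_ratCast_mul, hq₂, sub_self])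
    exact one_ne_zero (hli.eq_zero_of_ratCast_add_mul_add_mul (a := r * q₁ - q₂) (b := -r) (c := 1)
      (by push_cast; linear_combination hr)).2.2

end intSpan

theorem AddSubgroup.exists_ne_zero_norm_lt_of_dense_map_imDiv_one {G : AddSubgroup ℂ}
    (h1 : (1 : ℂ) ∈ G) (hG : Dense (G.map (imDiv 1) : Set ℝ)) {ε : ℝ} (hε : 0 < ε) :
    ∃ g ∈ G, g ≠ 0 ∧ ‖g‖ < ε := by
  refine G.exists_ne_zero_norm_lt_of_infinite_inter (Metric.isBounded_closedBall (x := 0) (r := 2))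
    ?_ hε
  have hinf : ((G.map (imDiv 1) : Set ℝ) ∩ Ioo 0 1).Infinite := fun hfin => by
    obtain ⟨y, hy, hyG, hy'⟩ :=
      (hG.sdiff_finite hfin).inter_open_nonempty _ isOpen_Ioo (nonempty_Ioo.2 zero_lt_one)
    exact hy' ⟨hyG, hy⟩
  refine (hinf.mono ?_).of_image (imDiv 1)
  rintro _ ⟨⟨s, hs, rfl⟩, him⟩
  -- translating by an integer moves `s` into the unit strip without changing its imaginary part
  refine ⟨s - ⌊s.re⌋, ⟨?_, G.sub_mem hs (by simpa using G.zsmul_mem h1 ⌊s.re⌋)⟩, by simp⟩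
  simp only [imDiv_apply, div_one] at him
  rw [Metric.mem_closedBall, dist_zero_right]
  refine (Complex.norm_le_abs_re_add_abs_im _).trans ?_
  have := Int.floor_le s.re
  have := Int.lt_floor_add_one s.re
  simp only [Complex.sub_re, Complex.intCast_re, Complex.sub_im, Complex.intCast_im, sub_zero]
  rw [abs_of_nonneg (by linarith), abs_of_pos him.1]
  linarith [him.2]

theorem stmt_6_general (α β : ℂ)
    (hli : LinearIndependent ℚ ![(1 : ℂ), α, β])
    (hfield : ∀ z ∈ Subfield.closure {α, β}, z.im = 0 → ∃ q : ℚ, z = (q : ℂ)) :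
    Dense {z : ℂ | ∃ a b c : ℤ, z = (a : ℂ) + (b : ℂ) * α + (c : ℂ) * β} := by
  set H := (intSpan α β).topologicalClosure
  have hsmall : ∀ ε > 0, ∃ h ∈ H, h ≠ 0 ∧ ‖h‖ < ε := fun ε hε => by
    obtain ⟨g, hg, hg0, hgε⟩ := (intSpan α β).exists_ne_zero_norm_lt_of_dense_map_imDiv_one
      one_mem_intSpan (dense_map_imDiv_intSpan hli hfield one_ne_zero) hε
    exact ⟨g, AddSubgroup.le_topologicalClosure _ hg, hg0, hgε⟩
  obtain ⟨v, hv, hline⟩ :=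
    AddSubgroup.exists_forall_smul_mem_of_isClosed (AddSubgroup.isClosed_topologicalClosure _) hsmall
  have hH : Dense (H : Set ℂ) := dense_of_forall_smul_mem_of_dense_map_imDiv hv hline
    ((dense_map_imDiv_intSpan hli hfield hv).mono
      (AddSubgroup.map_mono (AddSubgroup.le_topologicalClosure _)))
  rw [AddSubgroup.topologicalClosure_coe, dense_closure] at hH
  exact hH

/-- If `α, β ∉ ℝ`, `1, α, β` are ℚ-linearly independent and `ℚ(α,β) ∩ ℝ = ℚ`,
then `{a + bα + cβ : a, b, c ∈ ℤ}` is dense in ℂ. -/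
theorem stmt_6 (α β : ℂ) (hα : α.im ≠ 0) (hβ : β.im ≠ 0)
    (hli : LinearIndependent ℚ ![(1 : ℂ), α, β])
    (hfield : ∀ z ∈ Subfield.closure {α, β}, z.im = 0 → ∃ q : ℚ, z = (q : ℂ)) :
    Dense {z : ℂ | ∃ a b c : ℤ, z = (a : ℂ) + (b : ℂ) * α + (c : ℂ) * β} :=
  stmt_6_general α β hli hfield
end

section
/- Let α and β be complex numbers with α non-real, such that 1, α, β are linearly independent over ℚ and ℚ(α,β) ∩ ℝ = ℚ. Write β = r + sα with r, s ∈ ℝ. Then 1, r, s are linearly independent over ℚ. -/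
/-!
If `1, r, s` satisfied a rational relation `a + b r + c s = 0` with `(b, c) ≠ 0`, then
`s (b α - c) = a + b β` would put the real number `s` in `ℚ(α, β)`, hence in `ℚ`; then
`r = β - s α` is rational too, and `β = r + s α` contradicts the independence of `1, α, β`.
-/

lemma LinearIndependent.triple_iff {R M : Type*} [Ring R] [AddCommGroup M] [Module R M]
    {x y z : M} :
    LinearIndependent R ![x, y, z] ↔
      ∀ a b c : R, a • x + b • y + c • z = 0 → a = 0 ∧ b = 0 ∧ c = 0 := by
  rw [Fintype.linearIndependent_iff]
  refine ⟨fun h a b c habc => ?_, fun h g hg => ?_⟩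
  · have := h ![a, b, c] (by simpa [Fin.sum_univ_three] using habc)
    exact ⟨this 0, this 1, this 2⟩
  · obtain ⟨h0, h1, h2⟩ := h (g 0) (g 1) (g 2) (by simpa [Fin.sum_univ_three] using hg)
    intro i
    fin_cases i <;> assumption

lemma Complex.ofReal_mul_sub_ofReal_eq_zero_iff {α : ℂ} (hα : α.im ≠ 0) {b c : ℝ} :
    (b : ℂ) * α - c = 0 ↔ b = 0 ∧ c = 0 := by
  refine ⟨fun h => ?_, fun ⟨hb, hc⟩ => by simp [hb, hc]⟩
  have hb : b = 0 := by
    simpa [hα] using congrArg Complex.im h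
  refine ⟨hb, ?_⟩
  simpa [hb] using h

lemma linearIndependent_one_of_coeff_not_mem {K : Subfield ℂ} {α β : ℂ} {r s : ℝ}
    (hα : α.im ≠ 0) (hαK : α ∈ K) (hβK : β ∈ K) (hβ : β = r + s * α) (hsK : (s : ℂ) ∉ K) :
    LinearIndependent ℚ ![(1 : ℝ), r, s] := by
  rw [LinearIndependent.triple_iff]
  intro a b c habc
  simp only [Rat.smul_def, mul_one] at habc
  have hbc : b = 0 ∧ c = 0 := by
    by_contra hbc
    have hden : ((b : ℝ) : ℂ) * α - ((c : ℝ) : ℂ) ≠ 0 := by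
      rw [Ne, Complex.ofReal_mul_sub_ofReal_eq_zero_iff hα]
      exact_mod_cast hbc
    have hs : (s : ℂ) = (a + b * β) / (b * α - c) := by
      push_cast at hden
      rw [eq_div_iff hden, hβ]
      have habcℂ : (a : ℂ) + b * r + c * s = 0 := by exact_mod_cast habc
      linear_combination -habcℂ
    apply hsK
    rw [hs]
    exact div_mem
      (add_mem (SubfieldClass.ratCast_mem K a) (mul_mem (SubfieldClass.ratCast_mem K b) hβK))
      (sub_mem (mul_mem (SubfieldClass.ratCast_mem K b) hαK) (SubfieldClass.ratCast_mem K c))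
  obtain ⟨rfl, rfl⟩ := hbc
  exact ⟨by simpa using habc, rfl, rfl⟩

/-- If `α ∉ ℝ`, `1, α, β` are ℚ-linearly independent, `ℚ(α,β) ∩ ℝ = ℚ` and
`β = r + sα` with `r, s` real, then `1, r, s` are ℚ-linearly independent. -/
theorem stmt_7 (α β : ℂ) (hα : α.im ≠ 0)
    (hli : LinearIndependent ℚ ![(1 : ℂ), α, β])
    (hfield : ∀ z ∈ Subfield.closure {α, β}, z.im = 0 → ∃ q : ℚ, z = (q : ℂ))
    (r s : ℝ) (hβ : β = (r : ℂ) + (s : ℂ) * α) :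
    LinearIndependent ℚ ![(1 : ℝ), r, s] := by
  set K := Subfield.closure ({α, β} : Set ℂ)
  have hαK : α ∈ K := Subfield.subset_closure (by simp)
  have hβK : β ∈ K := Subfield.subset_closure (by simp)
  refine linearIndependent_one_of_coeff_not_mem hα hαK hβK hβ fun hsK => ?_
  obtain ⟨q, hq⟩ := hfield _ hsK (Complex.ofReal_im s)
  have hrK : (r : ℂ) ∈ K := by
    rw [show (r : ℂ) = β - q * α by rw [hβ, hq]; ring]
    exact sub_mem hβK (mul_mem (SubfieldClass.ratCast_mem K q) hαK)
  obtain ⟨p, hp⟩ := hfield _ hrK (Complex.ofReal_im r)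
  have := (LinearIndependent.triple_iff.mp hli) p q (-1)
    (by simp only [Rat.smul_def]; rw [hβ, hp, hq]; push_cast; ring)
  norm_num at this
end

section
/- Let K be a number field not contained in ℝ such that the ring of integers O_K contains a real irrational element. Then O_K is dense in ℂ. -/
/-!
The real algebraic integers of `K` form a subring of `ℝ` containing `1` and an irrational number,
hence are dense in `ℝ`. The topological closure of the integers of `K` is a subring of `ℂ`; it
therefore contains `ℝ` together with a non-real integer `w` of `K` (a suitable integer multiple of
any non-real element of `K`), and so contains `ℝ + ℝ w = ℂ`.
-/

def Subfield.ringOfIntegers (K : Subfield ℂ) : Subring ℂ :=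
  K.toSubring ⊓ (integralClosure ℤ ℂ).toSubring

theorem Subfield.exists_int_mul_isIntegral {L : Type*} [Field L] [CharZero L] (K : Subfield L)
    [FiniteDimensional ℚ K] {z : L} (hz : z ∈ K) : ∃ n : ℤ, n ≠ 0 ∧ IsIntegral ℤ (n * z) := by
  have hℚ : IsIntegral ℚ z :=
    (Algebra.IsIntegral.isIntegral (R := ℚ) (⟨z, hz⟩ : K)).map K.subtype.toRatAlgHom
  obtain ⟨n, hn, hnz⟩ :=
    ((IsFractionRing.isAlgebraic_iff ℤ ℚ L).mpr hℚ.isAlgebraic).exists_integral_multiple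
  exact ⟨n, hn, by rwa [← zsmul_eq_mul]⟩

theorem Real.dense_of_irrational_mem (S : Subring ℝ) {x : ℝ} (hx : Irrational x) (hxS : x ∈ S) :
    Dense (S : Set ℝ) := by
  refine (dense_addSubgroupClosure_pair_iff.mpr (by rwa [div_one])).mono ?_
  rw [← S.coe_toAddSubgroup, SetLike.coe_subset_coe, AddSubgroup.closure_le]
  exact Set.pair_subset hxS S.one_mem

theorem Complex.eq_ofReal_add_ofReal_mul {w : ℂ} (hw : w.im ≠ 0) (u : ℂ) :
    u = ↑(u.re - u.im / w.im * w.re) + ↑(u.im / w.im) * w := by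
  apply Complex.ext <;> simp [field]

theorem Complex.dense_subring_of_im_ne_zero (S : Subring ℂ)
    (hS : Dense (S.comap Complex.ofRealHom : Set ℝ)) {w : ℂ} (hwS : w ∈ S) (hw : w.im ≠ 0) :
    Dense (S : Set ℂ) := by
  have hreal (r : ℝ) : (r : ℂ) ∈ S.topologicalClosure :=
    map_mem_closure Complex.continuous_ofReal (hS r) fun _ h => h
  intro u
  rw [Complex.eq_ofReal_add_ofReal_mul hw u]
  exact add_mem (hreal _) (mul_mem (hreal _) (S.le_topologicalClosure hwS))

/-- If a number field `K ⊆ ℂ` is not contained in ℝ and its ring of integers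
contains a real irrational element, then the ring of integers is dense in ℂ. -/
theorem stmt_8 (K : Subfield ℂ) (hfd : FiniteDimensional ℚ K)
    (hK : ¬ (K : Set ℂ) ⊆ {z : ℂ | z.im = 0})
    (hint : ∃ x : ℝ, Irrational x ∧ (x : ℂ) ∈ K ∧ IsIntegral ℤ (x : ℂ)) :
    Dense {z : ℂ | z ∈ K ∧ IsIntegral ℤ z} := by
  obtain ⟨x, hx, hxK, hxint⟩ := hint
  obtain ⟨z, hzK, hz⟩ := Set.not_subset.mp hK
  obtain ⟨n, hn, hnz⟩ := K.exists_int_mul_isIntegral hzK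
  refine Complex.dense_subring_of_im_ne_zero K.ringOfIntegers
    (Real.dense_of_irrational_mem _ hx ⟨hxK, hxint⟩)
    (w := n * z) ⟨K.mul_mem (K.intCast_mem n) hzK, hnz⟩ ?_
  simpa using ⟨hn, hz⟩
end

section
/- Let K be a number field embedded in ℂ. The ring of integers O_K is dense in ℂ if and only if K is not contained in ℝ and [K:ℚ] ≥ 3. -/
/-!
If `K ⊆ ℝ` then `𝓞 K ⊆ ℝ`. If `[K:ℚ] ≤ 2`, a non-real integer `z ∈ 𝓞 K` has minimal polynomial
`X² + bX + c` over `ℤ`, and comparing imaginary parts gives `2 Re z = -b ∈ ℤ`; so `𝓞 K` misses the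
open set `0 < Re z < 1/2, Im z ≠ 0`.

Conversely, if `[K:ℚ] ≥ 3` then `K` has an infinite place besides the given embedding, so by
Dirichlet's unit theorem there is a unit `u` with `0 < |u| < 1` in `ℂ`, and the `uⁿ` are arbitrarily
small nonzero integers. If moreover `K ⊄ ℝ`, pick a non-real `α ∈ 𝓞 K`: for small `g ∈ 𝓞 K`, the
lattice `g(ℤ + ℤα) ⊆ 𝓞 K` comes within `|g|(1 + |α|)/2` of every point of `ℂ`.
-/

open Polynomial NumberField NumberField.InfinitePlace

namespace Complex

theorem exists_norm_sub_int_add_int_mul_le {α : ℂ} (hα : α.im ≠ 0) (w : ℂ) :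
    ∃ m n : ℤ, ‖w - (m + n * α)‖ ≤ (1 + ‖α‖) / 2 := by
  set n := round (w.im / α.im)
  set m := round (w - n * α).re
  refine ⟨m, n, ?_⟩
  have hre : |(w - (m + n * α)).re| ≤ 1 / 2 := by
    have : (w - (m + n * α)).re = (w - n * α).re - m := by
      simp only [sub_re, add_re, intCast_re, mul_re, intCast_im, zero_mul, sub_zero]
      ring
    rw [this]
    exact abs_sub_round _
  have him : |(w - (m + n * α)).im| ≤ ‖α‖ / 2 := by
    have : (w - (m + n * α)).im = (w.im / α.im - n) * α.im := by
      simp only [sub_im, add_im, intCast_im, mul_im, intCast_re, zero_mul, add_zero, zero_add]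
      field_simp
    rw [this, abs_mul]
    calc |w.im / α.im - n| * |α.im| ≤ 1 / 2 * ‖α‖ :=
          mul_le_mul (abs_sub_round _) (abs_im_le_norm α) (abs_nonneg _) (by norm_num)
      _ = ‖α‖ / 2 := by ring
  calc ‖w - (m + n * α)‖ ≤ |(w - (m + n * α)).re| + |(w - (m + n * α)).im| :=
        norm_le_abs_re_add_abs_im _
    _ ≤ (1 + ‖α‖) / 2 := by linarith

theorem dense_subring_of_im_ne_zero_s9 {R : Subring ℂ} {α : ℂ} (hαR : α ∈ R) (hα : α.im ≠ 0)
    (hsmall : ∀ ε > 0, ∃ g ∈ R, g ≠ 0 ∧ ‖g‖ < ε) : Dense (R : Set ℂ) := by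
  refine Metric.dense_iff.2 fun z r hr => ?_
  have hC : 0 < 1 + ‖α‖ := by positivity
  obtain ⟨g, hgR, hg0, hg⟩ := hsmall (r / (1 + ‖α‖)) (by positivity)
  obtain ⟨m, n, hmn⟩ := exists_norm_sub_int_add_int_mul_le hα (z / g)
  refine ⟨g * (m + n * α), ?_, ?_⟩
  · rw [Metric.mem_ball, dist_comm, dist_eq_norm]
    calc ‖z - g * (m + n * α)‖ = ‖g‖ * ‖z / g - (m + n * α)‖ := by
          rw [← norm_mul, mul_sub, mul_div_cancel₀ _ hg0]
      _ ≤ ‖g‖ * ((1 + ‖α‖) / 2) := by gcongr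
      _ < r := by
          rw [lt_div_iff₀ hC] at hg
          nlinarith [norm_nonneg g]
  · exact R.mul_mem hgR (R.add_mem (intCast_mem R m) (R.mul_mem (intCast_mem R n) hαR))

theorem two_mul_re_eq_neg_coeff_one {p : ℤ[X]} (hp : p.Monic) (hdeg : p.natDegree = 2) {z : ℂ}
    (hz : aeval z p = 0) (him : z.im ≠ 0) : 2 * z.re = -p.coeff 1 := by
  have hc2 : p.coeff 2 = 1 := hdeg ▸ hp.coeff_natDegree
  rw [aeval_eq_sum_range, hdeg, Finset.sum_range_succ, Finset.sum_range_succ,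
    Finset.sum_range_one, hc2] at hz
  have him_eq := congrArg im hz
  simp only [pow_zero, zsmul_eq_mul, mul_one, pow_one, pow_two, one_smul, add_im, intCast_im,
    mul_im, intCast_re, zero_mul, add_zero, zero_add, zero_im] at him_eq
  have : z.im * (2 * z.re + p.coeff 1) = 0 := by linear_combination him_eq
  linarith [(mul_eq_zero.1 this).resolve_left him]

end Complex

namespace Subfield

theorem natDegree_minpoly_int_le_finrank {L : Type*} [Field L] [CharZero L] (K : Subfield L)
    [FiniteDimensional ℚ K] {z : L} (hzK : z ∈ K) (hz : IsIntegral ℤ z) :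
    (minpoly ℤ z).natDegree ≤ Module.finrank ℚ K := by
  set y : K := ⟨z, hzK⟩
  have hy : IsIntegral ℤ y :=
    (isIntegral_algHom_iff K.subtype.toIntAlgHom Subtype.val_injective).1 hz
  have hzy : minpoly ℤ z = minpoly ℤ y :=
    minpoly.algHom_eq K.subtype.toIntAlgHom Subtype.val_injective y
  calc (minpoly ℤ z).natDegree = (minpoly ℚ y).natDegree := by
        rw [hzy, minpoly.isIntegrallyClosed_eq_field_fractions' ℚ hy,
          (minpoly.monic hy).natDegree_map]
    _ ≤ _ := minpoly.natDegree_le y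

theorem two_mul_re_eq_intCast_of_finrank_le_two (K : Subfield ℂ) [FiniteDimensional ℚ K]
    (hK : Module.finrank ℚ K ≤ 2) {z : ℂ} (hzK : z ∈ K) (hz : IsIntegral ℤ z) (him : z.im ≠ 0) :
    ∃ n : ℤ, 2 * z.re = n := by
  have hz' : z ∉ (algebraMap ℤ ℂ).range := by
    rintro ⟨n, rfl⟩
    simp at him
  have hdeg : (minpoly ℤ z).natDegree = 2 :=
    le_antisymm ((natDegree_minpoly_int_le_finrank K hzK hz).trans hK)
      ((minpoly.two_le_natDegree_iff hz).2 hz')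
  refine ⟨-(minpoly ℤ z).coeff 1, ?_⟩
  push_cast
  exact Complex.two_mul_re_eq_neg_coeff_one (minpoly.monic hz) hdeg (minpoly.aeval ℤ z) him

theorem three_le_finrank_of_dense (K : Subfield ℂ) [FiniteDimensional ℚ K]
    (hK : Dense {z : ℂ | z ∈ K ∧ IsIntegral ℤ z}) : 3 ≤ Module.finrank ℚ K := by
  by_contra! hdeg
  obtain ⟨z, ⟨hzK, hz⟩, ⟨hre0, hre1⟩, him⟩ := hK.exists_mem_open
    ((isOpen_Ioo.preimage Complex.continuous_re).inter
      (isOpen_compl_singleton.preimage Complex.continuous_im) :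
      IsOpen (Complex.re ⁻¹' Set.Ioo 0 (1 / 2) ∩ Complex.im ⁻¹' {0}ᶜ))
    ⟨1 / 4 + Complex.I, by norm_num⟩
  obtain ⟨n, hn⟩ := K.two_mul_re_eq_intCast_of_finrank_le_two (by omega) hzK hz him
  have h0 : (0 : ℝ) < n := by linarith
  have h1 : (n : ℝ) < 1 := by linarith
  norm_cast at h0 h1
  omega

theorem exists_isIntegral_im_ne_zero (K : Subfield ℂ) [FiniteDimensional ℚ K]
    (hK : ¬ (K : Set ℂ) ⊆ {z : ℂ | z.im = 0}) : ∃ α ∈ K, IsIntegral ℤ α ∧ α.im ≠ 0 := by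
  obtain ⟨x, hxK, hx⟩ := Set.not_subset.1 hK
  have hxalg : IsAlgebraic ℤ x := by
    have : IsIntegral ℚ x := (IsIntegral.of_finite ℚ (⟨x, hxK⟩ : K)).map K.subtype.toRatAlgHom
    exact (IsFractionRing.isAlgebraic_iff ℤ ℚ ℂ).2 this.isAlgebraic
  obtain ⟨d, hd, hdx⟩ := hxalg.exists_integral_multiple
  refine ⟨d • x, zsmul_mem hxK d, hdx, ?_⟩
  simpa [zsmul_eq_mul] using ⟨hd, hx⟩

end Subfield

namespace NumberField.InfinitePlace

variable {K : Type*} [Field K] [NumberField K]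

theorem exists_ne_of_three_le_finrank (h : 3 ≤ Module.finrank ℚ K) (w₀ : InfinitePlace K) :
    ∃ w, w ≠ w₀ := by
  by_contra! hw
  have hsum := sum_mult_eq (K := K)
  rw [Fintype.sum_eq_single w₀ fun w hw' => absurd (hw w) hw'] at hsum
  have : mult w₀ ≤ 2 := by unfold mult; split_ifs <;> norm_num
  omega

theorem exists_ringOfIntegers_lt {w₀ w₁ : InfinitePlace K} (hw : w₀ ≠ w₁) {ε : ℝ} (hε : 0 < ε) :
    ∃ a : 𝓞 K, a ≠ 0 ∧ w₀ a < ε := by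
  obtain ⟨u, hu⟩ := Units.dirichletUnitTheorem.exists_unit K w₁
  have hpos : 0 < w₀ (u : 𝓞 K) := pos_iff.2 (RingOfIntegers.coe_ne_zero_iff.2 u.ne_zero)
  obtain ⟨n, hn⟩ := exists_pow_lt_of_lt_one hε ((Real.log_neg_iff hpos).1 (hu w₀ hw))
  exact ⟨(u : 𝓞 K) ^ n, by simp, by simpa using hn⟩

end NumberField.InfinitePlace

/-- For a number field `K ⊆ ℂ`, the ring of integers of `K` is dense in ℂ
if and only if `K` is not contained in ℝ and `[K:ℚ] ≥ 3`. -/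
theorem stmt_9 (K : Subfield ℂ) (hfd : FiniteDimensional ℚ K) :
    Dense {z : ℂ | z ∈ K ∧ IsIntegral ℤ z} ↔
      (¬ (K : Set ℂ) ⊆ {z : ℂ | z.im = 0}) ∧ 3 ≤ Module.finrank ℚ K := by
  set R : Subring ℂ := K.toSubring ⊓ (integralClosure ℤ ℂ).toSubring
  change Dense (R : Set ℂ) ↔ _
  refine ⟨fun hR => ⟨fun hK => ?_, K.three_le_finrank_of_dense hR⟩, ?_⟩
  · obtain ⟨z, ⟨hzK, -⟩, hz⟩ := hR.exists_mem_open
      (isOpen_compl_singleton.preimage Complex.continuous_im : IsOpen (Complex.im ⁻¹' {0}ᶜ))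
      ⟨Complex.I, by simp⟩
    exact hz (hK hzK)
  · rintro ⟨hreal, hdeg⟩
    have : NumberField K := ⟨⟩
    obtain ⟨α, hαK, hα, hαim⟩ := K.exists_isIntegral_im_ne_zero hreal
    obtain ⟨w₁, hw₁⟩ := exists_ne_of_three_le_finrank hdeg (mk K.subtype)
    refine Complex.dense_subring_of_im_ne_zero_s9 (α := α) ⟨hαK, hα⟩ hαim fun ε hε => ?_
    obtain ⟨a, ha0, ha⟩ := exists_ringOfIntegers_lt hw₁.symm hε
    exact ⟨((a : K) : ℂ), ⟨(a : K).2, (RingOfIntegers.isIntegral_coe a).map K.subtype.toIntAlgHom⟩,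
      by simpa using ha0, ha⟩
end

section
/- Let K be a number field with class number h, and let α, β ∈ K be non-zero multiplicatively dependent elements. Then there exist γ ∈ K, roots of unity η₁, η₂ ∈ K, and integers l, m such that α^h = η₁ γ^l and β^h = η₂ γ^m. -/
/-!
Write `(k₁, k₂) = d • (a, b)` with `d = gcd k₁ k₂` and `u * a + v * b = 1`. Then `ζ = α ^ a * β ^ b`
satisfies `ζ ^ d = 1`, and completing `(a, b)` to the matrix `[[a, b], [-v, u]] ∈ GL₂(ℤ)` gives
`γ = α ^ (-v) * β ^ u` with `α = ζ ^ u * γ ^ (-b)` and `β = ζ ^ v * γ ^ a`.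
-/

section CommGroup

variable {G : Type*} [CommGroup G]

theorem exists_isOfFinOrder_mul_zpow_of_isCoprime {α β : G} {a b : ℤ} (hab : IsCoprime a b)
    (hζ : IsOfFinOrder (α ^ a * β ^ b)) :
    ∃ γ ζ₁ ζ₂ : G, IsOfFinOrder ζ₁ ∧ IsOfFinOrder ζ₂ ∧
      ∃ l m : ℤ, α = ζ₁ * γ ^ l ∧ β = ζ₂ * γ ^ m := by
  obtain ⟨u, v, huv⟩ := hab
  refine ⟨α ^ (-v) * β ^ u, (α ^ a * β ^ b) ^ u, (α ^ a * β ^ b) ^ v, hζ.zpow, hζ.zpow,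
    -b, a, ?_, ?_⟩ <;>
  rw [mul_zpow, mul_zpow, ← zpow_mul, ← zpow_mul, ← zpow_mul, ← zpow_mul, mul_mul_mul_comm,
    ← zpow_add, ← zpow_add]
  · rw [show a * u + -v * -b = 1 by linear_combination huv,
      show b * u + u * -b = 0 by ring, zpow_one, zpow_zero, mul_one]
  · rw [show a * v + -v * a = 0 by ring,
      show b * v + u * a = 1 by linear_combination huv, zpow_one, zpow_zero, one_mul]

theorem exists_isOfFinOrder_mul_zpow_of_zpow_mul_zpow_eq_one {α β : G} {k₁ k₂ : ℤ}
    (hk : ¬ (k₁ = 0 ∧ k₂ = 0)) (h : α ^ k₁ * β ^ k₂ = 1) :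
    ∃ γ ζ₁ ζ₂ : G, IsOfFinOrder ζ₁ ∧ IsOfFinOrder ζ₂ ∧
      ∃ l m : ℤ, α = ζ₁ * γ ^ l ∧ β = ζ₂ * γ ^ m := by
  set d := gcd k₁ k₂
  have hd : d ≠ 0 := by rwa [Ne, gcd_eq_zero_iff]
  refine exists_isOfFinOrder_mul_zpow_of_isCoprime (isCoprime_div_gcd_div_gcd_of_gcd_ne_zero hd)
    (isOfFinOrder_iff_zpow_eq_one.mpr ⟨d, hd, ?_⟩)
  rw [mul_zpow, ← zpow_mul, ← zpow_mul, mul_comm, Int.ediv_mul_cancel (gcd_dvd_left _ _),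
    mul_comm, Int.ediv_mul_cancel (gcd_dvd_right _ _), h]

theorem exists_isOfFinOrder_pow_eq_mul_zpow_of_zpow_mul_zpow_eq_one {α β : G} {k₁ k₂ : ℤ}
    (hk : ¬ (k₁ = 0 ∧ k₂ = 0)) (h : α ^ k₁ * β ^ k₂ = 1) (n : ℕ) :
    ∃ γ ζ₁ ζ₂ : G, IsOfFinOrder ζ₁ ∧ IsOfFinOrder ζ₂ ∧
      ∃ l m : ℤ, α ^ n = ζ₁ * γ ^ l ∧ β ^ n = ζ₂ * γ ^ m := by
  obtain ⟨γ, ζ₁, ζ₂, hζ₁, hζ₂, l, m, hl, hm⟩ :=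
    exists_isOfFinOrder_mul_zpow_of_zpow_mul_zpow_eq_one hk h
  refine ⟨γ, ζ₁ ^ n, ζ₂ ^ n, hζ₁.pow, hζ₂.pow, l * n, m * n, ?_, ?_⟩
  · rw [hl, mul_pow, zpow_mul, zpow_natCast]
  · rw [hm, mul_pow, zpow_mul, zpow_natCast]

end CommGroup

/-- If `α, β` are nonzero multiplicatively dependent elements of a number field `K`
with class number `h`, then `α^h = η₁ γ^l` and `β^h = η₂ γ^m` for some `γ ∈ K`,
roots of unity `η₁, η₂ ∈ K` and integers `l, m`. -/
theorem stmt_11 (K : Type*) [Field K] [NumberField K] (α β : K)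
    (hα : α ≠ 0) (hβ : β ≠ 0)
    (hdep : ∃ k₁ k₂ : ℤ, ¬ (k₁ = 0 ∧ k₂ = 0) ∧ α ^ k₁ * β ^ k₂ = 1) :
    ∃ γ η₁ η₂ : K, (∃ n : ℕ, 0 < n ∧ η₁ ^ n = 1) ∧ (∃ n : ℕ, 0 < n ∧ η₂ ^ n = 1) ∧
      ∃ l m : ℤ, α ^ (NumberField.classNumber K) = η₁ * γ ^ l ∧
        β ^ (NumberField.classNumber K) = η₂ * γ ^ m := by
  obtain ⟨k₁, k₂, hk, h⟩ := hdep
  have hunits : Units.mk0 α hα ^ k₁ * Units.mk0 β hβ ^ k₂ = 1 := by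
    ext; simpa using h
  obtain ⟨γ, ζ₁, ζ₂, hζ₁, hζ₂, l, m, hl, hm⟩ :=
    exists_isOfFinOrder_pow_eq_mul_zpow_of_zpow_mul_zpow_eq_one hk hunits
      (NumberField.classNumber K)
  refine ⟨γ, ζ₁, ζ₂, (Units.isOfFinOrder_val.mpr hζ₁).exists_pow_eq_one,
    (Units.isOfFinOrder_val.mpr hζ₂).exists_pow_eq_one, l, m, ?_, ?_⟩
  · simpa using congrArg Units.val hl
  · simpa using congrArg Units.val hm
end

section
/- There exist positive constants c₁ and c₂ such that for all H > 1, c₁·H ≤ ρ₂(H;ℤ) ≤ c₂·H, where ρ₂(H;ℤ) = sup over x ∈ ℝ² with ‖x‖ ≤ H of the infimum over v ∈ M₂(ℤ) of ‖x − v‖. In particular, the point x = (H/2, 3H/4) has Euclidean distance at least H/12 from every multiplicatively dependent vector in ℤ². -/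
/-!
Every point of the ball of radius `H` lies within `H + √2` of the dependent vector `(1, 1)`,
which gives the upper bound. For the lower bound, an integer vector within `H / 12` of
`(H / 2, 3 H / 4)` has coordinates `0 < p < q < 2 p`. Such `p` and `q` are multiplicatively
independent: `p ^ m = q ^ n` with `n > 0` forces `n ≤ m`, hence `p ^ n ∣ q ^ n` and `p ∣ q`,
which is impossible strictly between `p` and `2 p`.
-/

open Real

theorem Int.dvd_of_pow_eq_pow {p q : ℤ} {m n : ℕ} (hp : 1 < p) (hpq : p ≤ q) (hn : n ≠ 0)
    (h : p ^ m = q ^ n) : p ∣ q := by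
  have hnm : n ≤ m := (pow_le_pow_iff_right₀ hp).1 (h ▸ pow_le_pow_left₀ (by omega) hpq n)
  exact (Int.pow_dvd_pow_iff hn).1 (h ▸ pow_dvd_pow p hnm)

theorem Int.pow_ne_pow_of_lt_of_lt_two_mul {p q : ℤ} {m n : ℕ} (hp : 0 < p) (hpq : p < q)
    (hq : q < 2 * p) (hn : n ≠ 0) : p ^ m ≠ q ^ n := by
  intro h
  obtain ⟨c, rfl⟩ := Int.dvd_of_pow_eq_pow (by omega) hpq.le hn h
  have hc₁ : 1 < c := by nlinarith
  have hc₂ : c < 2 := by nlinarith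
  omega

theorem pow_natAbs_eq_of_zpow_eq {K : Type*} [Field K] [LinearOrder K] [IsStrictOrderedRing K]
    {x y : K} (hx : 1 ≤ x) (hy : 1 < y) {a c : ℤ} (h : x ^ a = y ^ c) :
    x ^ a.natAbs = y ^ c.natAbs := by
  wlog ha : 0 ≤ a generalizing a c
  · simpa using this (a := -a) (c := -c) (by rw [zpow_neg, zpow_neg, h]) (by omega)
  have hc : 0 ≤ c := (one_le_zpow_iff_right₀ hy).1 (h ▸ one_le_zpow₀ hx ha)
  rw [← zpow_natCast, ← zpow_natCast, Int.natAbs_of_nonneg ha, Int.natAbs_of_nonneg hc, h]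

theorem eq_zero_of_zpow_mul_zpow_eq_one {p q : ℤ} (hp : 0 < p) (hpq : p < q) (hq : q < 2 * p)
    {a b : ℤ} (h : (p : ℝ) ^ a * (q : ℝ) ^ b = 1) : a = 0 ∧ b = 0 := by
  have hp₁ : (1 : ℝ) < p := by exact_mod_cast (by omega : 1 < p)
  have hq₁ : (1 : ℝ) < q := by exact_mod_cast (by omega : 1 < q)
  have hpow : p ^ a.natAbs = q ^ b.natAbs := by
    have hzpow : (p : ℝ) ^ a = (q : ℝ) ^ (-b) := by
      rw [zpow_neg]
      exact eq_inv_of_mul_eq_one_left h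
    have := pow_natAbs_eq_of_zpow_eq hp₁.le hq₁ hzpow
    rw [Int.natAbs_neg] at this
    exact_mod_cast this
  have hb : b.natAbs = 0 := by
    by_contra hb
    exact Int.pow_ne_pow_of_lt_of_lt_two_mul hp hpq hq hb hpow
  rw [hb, pow_zero, ← pow_zero p, pow_right_inj₀ hp (by omega)] at hpow
  omega

theorem not_multDependent_of_lt_of_lt_two_mul {v : Fin 2 → ℤ} (h₀ : 0 < v 0) (h₀₁ : v 0 < v 1)
    (h₁ : v 1 < 2 * v 0) : ¬ ∃ k : Fin 2 → ℤ, k ≠ 0 ∧ ∏ i, (v i : ℝ) ^ k i = 1 := by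
  rintro ⟨k, hk, hprod⟩
  rw [Fin.prod_univ_two] at hprod
  obtain ⟨hk₀, hk₁⟩ := eq_zero_of_zpow_mul_zpow_eq_one h₀ h₀₁ h₁ hprod
  exact hk (funext fun i => by fin_cases i <;> assumption)

noncomputable def farPoint (H : ℝ) : EuclideanSpace ℝ (Fin 2) := WithLp.toLp 2 ![H / 2, 3 * H / 4]

theorem norm_farPoint_le {H : ℝ} (hH : 0 ≤ H) : ‖farPoint H‖ ≤ H := by
  refine (EuclideanSpace.norm_eq _).trans_le (Real.sqrt_le_iff.2 ⟨hH, ?_⟩)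
  simp only [farPoint, norm_eq_abs, sq_abs, Fin.sum_univ_two, Matrix.cons_val_zero,
    Matrix.cons_val_one, Matrix.cons_val_fin_one]
  nlinarith

theorem le_dist_farPoint_of_multDependent (H : ℝ) (v : Fin 2 → ℤ)
    (hv : ∃ k : Fin 2 → ℤ, k ≠ 0 ∧ ∏ i, (v i : ℝ) ^ k i = 1) :
    H / 12 ≤ dist (farPoint H) (WithLp.toLp 2 fun i => (v i : ℝ)) := by
  by_contra! hlt
  have h₀ := (PiLp.dist_apply_le _ _ 0).trans_lt hlt
  have h₁ := (PiLp.dist_apply_le _ _ 1).trans_lt hlt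
  simp only [Real.dist_eq, abs_lt, farPoint, Matrix.cons_val_zero, Matrix.cons_val_one] at h₀ h₁
  refine not_multDependent_of_lt_of_lt_two_mul ?_ ?_ ?_ hv
  · exact_mod_cast (by linarith : (0 : ℝ) < v 0)
  · exact_mod_cast (by linarith : (v 0 : ℝ) < v 1)
  · exact_mod_cast (by linarith : (v 1 : ℝ) < 2 * v 0)

/-- `M₂(ℤ)`. -/
def multDependent : Set (Fin 2 → ℤ) :=
  {v | (∀ i, v i ≠ 0) ∧ ∃ k : Fin 2 → ℤ, k ≠ 0 ∧ ∏ i, (v i : ℝ) ^ k i = 1}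

theorem one_mem_multDependent : (fun _ => 1) ∈ multDependent :=
  ⟨fun _ => one_ne_zero, ![1, 0], fun h => by simpa using congrFun h 0, by simp⟩

noncomputable def distMultDependent (x : EuclideanSpace ℝ (Fin 2)) : ℝ :=
  ⨅ v : multDependent, dist x (WithLp.toLp 2 fun i => ((v : Fin 2 → ℤ) i : ℝ))

theorem distMultDependent_le (x : EuclideanSpace ℝ (Fin 2)) : distMultDependent x ≤ ‖x‖ + √2 := by
  have hbdd : BddBelow (Set.range fun v : multDependent =>
      dist x (WithLp.toLp 2 fun i => ((v : Fin 2 → ℤ) i : ℝ))) :=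
    ⟨0, Set.forall_mem_range.2 fun _ => dist_nonneg⟩
  refine (ciInf_le hbdd ⟨_, one_mem_multDependent⟩).trans ((dist_le_norm_add_norm _ _).trans ?_)
  simp [EuclideanSpace.norm_eq]

theorem le_distMultDependent_farPoint (H : ℝ) : H / 12 ≤ distMultDependent (farPoint H) :=
  have : Nonempty multDependent := ⟨⟨_, one_mem_multDependent⟩⟩
  le_ciInf fun v => le_dist_farPoint_of_multDependent H v v.2.2

/-- `ρ₂(H;ℤ) ≍ H`; moreover `(H/2, 3H/4)` is at distance at least `H/12` from
every multiplicatively dependent vector in `ℤ²`. -/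
theorem stmt_14 :
    ∃ c₁ : ℝ, 0 < c₁ ∧ ∃ c₂ : ℝ, 0 < c₂ ∧ ∀ H : ℝ, 1 < H →
      (c₁ * H ≤
          ⨆ x : {x : EuclideanSpace ℝ (Fin 2) // ‖x‖ ≤ H},
            ⨅ v : {v : Fin 2 → ℤ // (∀ i, v i ≠ 0) ∧
                ∃ k : Fin 2 → ℤ, k ≠ 0 ∧ ∏ i, (v i : ℝ) ^ k i = 1},
              dist (x : EuclideanSpace ℝ (Fin 2))
                (WithLp.toLp 2 (fun i => ((v : Fin 2 → ℤ) i : ℝ)) : EuclideanSpace ℝ (Fin 2)) ∧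
        (⨆ x : {x : EuclideanSpace ℝ (Fin 2) // ‖x‖ ≤ H},
            ⨅ v : {v : Fin 2 → ℤ // (∀ i, v i ≠ 0) ∧
                ∃ k : Fin 2 → ℤ, k ≠ 0 ∧ ∏ i, (v i : ℝ) ^ k i = 1},
              dist (x : EuclideanSpace ℝ (Fin 2))
                (WithLp.toLp 2 (fun i => ((v : Fin 2 → ℤ) i : ℝ)) : EuclideanSpace ℝ (Fin 2))) ≤ c₂ * H) ∧
      ∀ v : Fin 2 → ℤ, (∀ i, v i ≠ 0) →
        (∃ k : Fin 2 → ℤ, k ≠ 0 ∧ ∏ i, (v i : ℝ) ^ k i = 1) →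
        H / 12 ≤ dist (WithLp.toLp 2 (![H / 2, 3 * H / 4]) : EuclideanSpace ℝ (Fin 2))
          (WithLp.toLp 2 (fun i => (v i : ℝ)) : EuclideanSpace ℝ (Fin 2)) := by
  refine ⟨1 / 12, by norm_num, 3, by norm_num, fun H hH =>
    ⟨?_, fun v _ hv => le_dist_farPoint_of_multDependent H v hv⟩⟩
  have : Nonempty {x : EuclideanSpace ℝ (Fin 2) // ‖x‖ ≤ H} := ⟨⟨0, by rw [norm_zero]; linarith⟩⟩
  have hle (x : {x : EuclideanSpace ℝ (Fin 2) // ‖x‖ ≤ H}) : distMultDependent x ≤ 3 * H :=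
    (distMultDependent_le x).trans (by linarith [x.2, sqrt_two_lt_three_halves])
  show 1 / 12 * H ≤ ⨆ x : {x : EuclideanSpace ℝ (Fin 2) // ‖x‖ ≤ H}, distMultDependent x ∧
    (⨆ x : {x : EuclideanSpace ℝ (Fin 2) // ‖x‖ ≤ H}, distMultDependent x) ≤ 3 * H
  refine ⟨?_, ciSup_le hle⟩
  calc 1 / 12 * H = H / 12 := by ring
    _ ≤ distMultDependent _ := le_distMultDependent_farPoint H
    _ ≤ _ := le_ciSup (f := fun x : {x : EuclideanSpace ℝ (Fin 2) // ‖x‖ ≤ H} =>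
        distMultDependent x) ⟨3 * H, Set.forall_mem_range.2 hle⟩ ⟨_, norm_farPoint_le (by linarith)⟩
end

section
/- Let H > 1 and x = (H/2, 3H/4) ∈ ℝ². Then for every pair v = (v₁, v₂) of positive multiplicatively dependent integers, the Euclidean distance ‖x − v‖ is at least H/12. -/
/-- If `k` divides every exponent in the factorization of `n ≠ 0`, then `n` is a `k`-th power. -/
lemma aux_root_of_dvd_factorization {n k : ℕ} (hn : n ≠ 0)
    (h : ∀ p, k ∣ n.factorization p) : ∃ w, n = w ^ k := by
  refine ⟨n.factorization.prod fun p e => p ^ (e / k), ?_⟩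
  conv_lhs => rw [← Nat.factorization_prod_pow_eq_self hn]
  rw [Finsupp.prod, Finsupp.prod, ← Finset.prod_pow]
  refine Finset.prod_congr rfl fun p _ => ?_
  rw [← pow_mul, Nat.div_mul_cancel (h p)]

lemma aux_classify (x y a b : ℕ) (hx : 2 ≤ x) (hy : 2 ≤ y) (ha : 0 < a) (hb : 0 < b)
    (h : x ^ a = y ^ b) : x = y ∨ 2 * x ≤ y ∨ 2 * y ≤ x := by
  have hg : 0 < Nat.gcd a b := Nat.gcd_pos_of_pos_left _ ha
  set a' := a / Nat.gcd a b with ha'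
  set b' := b / Nat.gcd a b with hb'
  have ha'pos : 0 < a' := Nat.div_pos (Nat.le_of_dvd ha (Nat.gcd_dvd_left a b)) hg
  have hb'pos : 0 < b' := Nat.div_pos (Nat.le_of_dvd hb (Nat.gcd_dvd_right a b)) hg
  have hcop : Nat.Coprime a' b' := Nat.coprime_div_gcd_div_gcd hg
  have h' : x ^ a' = y ^ b' := by
    apply Nat.pow_left_injective (n := Nat.gcd a b) (by omega)
    show (x ^ a') ^ Nat.gcd a b = (y ^ b') ^ Nat.gcd a b
    rw [← pow_mul, ← pow_mul, Nat.div_mul_cancel (Nat.gcd_dvd_left a b),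
      Nat.div_mul_cancel (Nat.gcd_dvd_right a b)]
    exact h
  have hx0 : x ≠ 0 := by omega
  have hy0 : y ≠ 0 := by omega
  have hfac : ∀ p, a' * x.factorization p = b' * y.factorization p := by
    intro p
    have := congrArg (fun m => m.factorization p) h'
    simpa [Nat.factorization_pow, Finsupp.smul_apply] using this
  obtain ⟨w, hw⟩ : ∃ w, x = w ^ b' := by
    refine aux_root_of_dvd_factorization hx0 fun p => ?_
    have hd2 : b' ∣ a' * x.factorization p := ⟨_, hfac p⟩
    exact hcop.symm.dvd_of_dvd_mul_right (by rwa [mul_comm] at hd2)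
  obtain ⟨u, hu⟩ : ∃ u, y = u ^ a' := by
    refine aux_root_of_dvd_factorization hy0 fun p => ?_
    have hd2 : a' ∣ b' * y.factorization p := ⟨_, (hfac p).symm⟩
    exact hcop.dvd_of_dvd_mul_right (by rwa [mul_comm] at hd2)
  have hwu : w = u := by
    apply Nat.pow_left_injective (n := a' * b') (by positivity)
    show w ^ (a' * b') = u ^ (a' * b')
    calc w ^ (a' * b') = (w ^ b') ^ a' := by rw [mul_comm, pow_mul]
      _ = x ^ a' := by rw [← hw]
      _ = y ^ b' := h'
      _ = (u ^ a') ^ b' := by rw [hu]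
      _ = u ^ (a' * b') := by rw [← pow_mul]
  subst hwu
  have hw2 : 2 ≤ w := by
    by_contra hlt
    push_neg at hlt
    have : x ≤ 1 := by
      calc x = w ^ b' := hw
        _ ≤ 1 ^ b' := Nat.pow_le_pow_left (by omega) _
        _ = 1 := one_pow _
    omega
  rcases lt_trichotomy a' b' with hab | hab | hab
  · right; right
    calc 2 * y = 2 * w ^ a' := by rw [hu]
      _ ≤ w * w ^ a' := Nat.mul_le_mul_right _ hw2
      _ = w ^ (a' + 1) := by ring
      _ ≤ w ^ b' := Nat.pow_le_pow_right (by omega) (by omega)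
      _ = x := hw.symm
  · left; rw [hw, hu, hab]
  · right; left
    calc 2 * x = 2 * w ^ b' := by rw [hw]
      _ ≤ w * w ^ b' := Nat.mul_le_mul_right _ hw2
      _ = w ^ (b' + 1) := by ring
      _ ≤ w ^ a' := Nat.pow_le_pow_right (by omega) (by omega)
      _ = y := hu.symm

set_option maxHeartbeats 1000000 in
/-- The point `(H/2, 3H/4)` is at Euclidean distance at least `H/12` from every
pair of positive multiplicatively dependent integers. -/
theorem stmt_16 (H : ℝ) (hH : 1 < H) (v₁ v₂ : ℕ) (h₁ : 1 ≤ v₁) (h₂ : 1 ≤ v₂)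
    (hdep : ∃ k₁ k₂ : ℤ, ¬ (k₁ = 0 ∧ k₂ = 0) ∧ (v₁ : ℝ) ^ k₁ * (v₂ : ℝ) ^ k₂ = 1) :
    H / 12 ≤ Real.sqrt ((H / 2 - (v₁ : ℝ)) ^ 2 + (3 * H / 4 - (v₂ : ℝ)) ^ 2) := by
  apply Real.le_sqrt_of_sq_le
  have h₁R : (1 : ℝ) ≤ (v₁ : ℝ) := by exact_mod_cast h₁
  have h₂R : (1 : ℝ) ≤ (v₂ : ℝ) := by exact_mod_cast h₂
  by_cases hv₁ : v₁ = 1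
  · subst hv₁
    rcases le_or_gt H (12/7) with hc | hc
    · nlinarith [sq_nonneg (3 * H / 4 - (v₂ : ℝ)), h₂R]
    rcases le_or_gt (12/5) H with hc2 | hc2
    · nlinarith [sq_nonneg (3 * H / 4 - (v₂ : ℝ))]
    rcases eq_or_lt_of_le h₂ with hv₂ | hv₂
    · rw [← hv₂]; push_cast; nlinarith [sq_nonneg (H / 2 - 1)]
    · have h2R : (2 : ℝ) ≤ (v₂ : ℝ) := by exact_mod_cast hv₂
      nlinarith [sq_nonneg (H / 2 - 1)]
  by_cases hv₂ : v₂ = 1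
  · subst hv₂
    push_cast
    rcases le_or_gt (3/2) H with hc | hc
    · nlinarith [sq_nonneg (H / 2 - (v₁ : ℝ))]
    rcases le_or_gt H (6/5) with hc2 | hc2
    · nlinarith [sq_nonneg (H / 2 - (v₁ : ℝ))]
    · nlinarith [sq_nonneg (3 * H / 4 - 1)]
  have hv₁2 : 2 ≤ v₁ := by omega
  have hv₂2 : 2 ≤ v₂ := by omega
  have hv₁R : (1 : ℝ) < (v₁ : ℝ) := by exact_mod_cast (by omega : 1 < v₁)
  have hv₂R : (1 : ℝ) < (v₂ : ℝ) := by exact_mod_cast (by omega : 1 < v₂)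
  obtain ⟨k₁, k₂, hk, heq⟩ := hdep
  obtain ⟨a, b, hA, hB, hab⟩ : ∃ a b : ℕ, 0 < a ∧ 0 < b ∧ v₁ ^ a = v₂ ^ b := by
    have flip : (v₁ : ℝ) ^ (-k₁) * (v₂ : ℝ) ^ (-k₂) = 1 := by
      rw [zpow_neg, zpow_neg, ← mul_inv, heq, inv_one]
    have contra_pos : ∀ m₁ m₂ : ℤ, 0 ≤ m₁ → 0 ≤ m₂ → ¬(m₁ = 0 ∧ m₂ = 0) →
        (v₁ : ℝ) ^ m₁ * (v₂ : ℝ) ^ m₂ ≠ 1 := by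
      intro m₁ m₂ hm₁ hm₂ hm h
      have A : (1 : ℝ) ≤ (v₁ : ℝ) ^ m₁ := one_le_zpow₀ hv₁R.le hm₁
      have B : (1 : ℝ) ≤ (v₂ : ℝ) ^ m₂ := one_le_zpow₀ hv₂R.le hm₂
      rcases lt_or_eq_of_le hm₁ with hp1 | hp1
      · have : (1 : ℝ) < (v₁ : ℝ) ^ m₁ := one_lt_zpow₀ hv₁R hp1
        nlinarith
      rcases lt_or_eq_of_le hm₂ with hp2 | hp2
      · have : (1 : ℝ) < (v₂ : ℝ) ^ m₂ := one_lt_zpow₀ hv₂R hp2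
        nlinarith
      exact hm ⟨hp1.symm, hp2.symm⟩
    have mkeq : ∀ p q : ℤ, 0 < p → 0 < q → (v₁ : ℝ) ^ p = (v₂ : ℝ) ^ q →
        ∃ a b : ℕ, 0 < a ∧ 0 < b ∧ v₁ ^ a = v₂ ^ b := by
      intro p q hp hq h
      refine ⟨p.toNat, q.toNat, by omega, by omega, ?_⟩
      have : (v₁ : ℝ) ^ (p.toNat) = (v₂ : ℝ) ^ (q.toNat) := by
        rw [← zpow_natCast, ← zpow_natCast, Int.toNat_of_nonneg hp.le,
          Int.toNat_of_nonneg hq.le]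
        exact h
      exact_mod_cast this
    rcases lt_trichotomy k₁ 0 with s1 | s1 | s1 <;> rcases lt_trichotomy k₂ 0 with s2 | s2 | s2
    · exact absurd flip (contra_pos _ _ (by omega) (by omega) (by omega))
    · exfalso
      apply contra_pos (-k₁) 0 (by omega) le_rfl (by omega)
      simpa [s2] using flip
    · -- k₁ < 0 < k₂
      apply mkeq (-k₁) k₂ (by omega) s2
      rw [show (v₂ : ℝ) ^ k₂ = ((v₂ : ℝ) ^ (-k₂))⁻¹ by rw [zpow_neg, inv_inv]]
      exact eq_inv_of_mul_eq_one_left flip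
    · exfalso
      apply contra_pos 0 (-k₂) le_rfl (by omega) (by omega)
      simpa [s1] using flip
    · exact absurd hk (by simp [s1, s2])
    · exfalso
      apply contra_pos 0 k₂ le_rfl (by omega) (by omega)
      simpa [s1] using heq
    · -- k₂ < 0 < k₁
      apply mkeq k₁ (-k₂) s1 (by omega)
      rw [zpow_neg]
      exact eq_inv_of_mul_eq_one_left heq
    · exfalso
      apply contra_pos k₁ 0 (by omega) le_rfl (by omega)
      simpa [s2] using heq
    · exact absurd heq (contra_pos _ _ (by omega) (by omega) hk)
  rcases aux_classify v₁ v₂ a b hv₁2 hv₂2 hA hB hab with hcase | hcase | hcase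
  · have : (v₁ : ℝ) = (v₂ : ℝ) := by exact_mod_cast hcase
    nlinarith [sq_nonneg ((H / 2 - (v₁ : ℝ)) + (3 * H / 4 - (v₂ : ℝ)))]
  · have hc : (2 * (v₁ : ℝ)) ≤ (v₂ : ℝ) := by exact_mod_cast hcase
    rcases le_or_gt (v₁ : ℝ) (5 * H / 12) with hd | hd
    · nlinarith [sq_nonneg (3 * H / 4 - (v₂ : ℝ))]
    · nlinarith [sq_nonneg (H / 2 - (v₁ : ℝ))]
  · have hc : (2 * (v₂ : ℝ)) ≤ (v₁ : ℝ) := by exact_mod_cast hcase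
    rcases le_or_gt (v₂ : ℝ) (2 * H / 3) with hd | hd
    · nlinarith [sq_nonneg (H / 2 - (v₁ : ℝ))]
    · nlinarith [sq_nonneg (3 * H / 4 - (v₂ : ℝ))]
end

section
/- Let K be an imaginary quadratic field with class number h. For every γ in the ring of integers O_K with |γ| > 1, one has |γ| ≥ √2, and consequently, for any H > 1 there exists a constant c > 0 depending only on K such that μ₂(H;O_K) ≥ c·H, where μ₂(H;O_K) = sup over z ∈ ℂ² with ‖z‖ ≤ H of the infimum over v ∈ M₂(O_K) of ‖z − v‖. -/
/-!
Write `K = ℚ + ℚα` with `α` non-real. From `α² = p + qα` with `p, q ∈ ℚ` one gets `ᾱ = q - α`,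
so `γγ̄ ∈ ℚ` for every `γ ∈ K`; for integral `γ` it is a rational algebraic integer, hence
`|γ|² ∈ ℕ`. This gives `|γ| ≥ √2` as soon as `|γ| > 1`.

If `(v₁, v₂)` is multiplicatively dependent, so are the integers `mᵢ = |vᵢ|²`; unless one of them
is `1`, a relation `m₁^a = m₂^b` forces the smaller to divide the larger, so `m₁ = m₂` or their
ratio is at least `2`. The point `(3H/5, 4H/5)` has `|z₂|²/|z₁|² = 16/9 ∈ (1, 2)` with room to
spare, so it stays at distance `≥ H/100` from `M₂(O_K)` once `H ≥ 2`; for `H ≤ 2` the origin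
does, since every point of `M₂(O_K)` has norm at least `1`.
-/

open Module ComplexConjugate

lemma conj_eq_sub_of_sq_eq {α : ℂ} (hα : α.im ≠ 0) {p q : ℝ} (h : α ^ 2 = p + q * α) :
    conj α = q - α := by
  have hconj : conj α ^ 2 = p + q * conj α := by simpa using congrArg conj h
  have hne : conj α - α ≠ 0 := fun h0 => by
    have := congrArg Complex.im h0
    simp only [Complex.sub_im, Complex.conj_im, Complex.zero_im] at this
    exact hα (by linarith)
  have : (conj α - α) * (conj α - (q - α)) = 0 := by linear_combination hconj - h
  exact sub_eq_zero.1 ((mul_eq_zero.1 this).resolve_left hne)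

lemma exists_pow_eq_pow_of_zpow_mul_zpow_eq_one {R : Type*} [Field R] [LinearOrder R]
    [IsStrictOrderedRing R] {x y : R} (hx : 1 < x) (hy : 1 < y) {k l : ℤ} (hkl : k ≠ 0 ∨ l ≠ 0)
    (h : x ^ k * y ^ l = 1) : ∃ a b : ℕ, b ≠ 0 ∧ x ^ a = y ^ b := by
  wlog hk : 0 ≤ k generalizing k l
  · refine this (k := -k) (l := -l) (by omega) ?_ (by omega)
    rw [zpow_neg, zpow_neg, ← mul_inv, h, inv_one]
  have hxy : x ^ k = y ^ (-l) := by rw [zpow_neg]; exact eq_inv_of_mul_eq_one_left h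
  have hl : 0 ≤ -l := (one_le_zpow_iff_right₀ hy).1 (hxy ▸ one_le_zpow₀ hx.le hk)
  lift k to ℕ using hk
  lift -l to ℕ using hl with b hb
  refine ⟨k, b, ?_, by simpa using hxy⟩
  rintro rfl
  exact (one_lt_pow₀ hx (n := k) (by omega)).ne' (by simpa using hxy)

lemma Nat.dvd_of_pow_eq_pow {m n a b : ℕ} (hm : 0 < m) (hmn : m ≤ n) (hb : b ≠ 0)
    (h : m ^ a = n ^ b) : m ∣ n := by
  obtain rfl | hm1 : m = 1 ∨ 1 < m := by omega
  · exact one_dvd n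
  have hba : b ≤ a := (Nat.pow_le_pow_iff_right hm1).1 (h ▸ Nat.pow_le_pow_left hmn b)
  exact (Nat.pow_dvd_pow_iff hb).1 (h ▸ pow_dvd_pow m hba)

lemma Nat.eq_one_or_eq_or_two_mul_le_of_zpow_mul_zpow_eq_one {m n : ℕ} (hm : 0 < m)
    (hn : 0 < n) {k l : ℤ} (hkl : k ≠ 0 ∨ l ≠ 0) (h : (m : ℝ) ^ k * (n : ℝ) ^ l = 1) :
    m = 1 ∨ n = 1 ∨ m = n ∨ 2 * m ≤ n ∨ 2 * n ≤ m := by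
  wlog hmn : m ≤ n generalizing m n k l
  · have := this hn hm hkl.symm (by rw [mul_comm, h]) (by omega)
    omega
  obtain rfl | hm1 := eq_or_ne m 1
  · exact Or.inl rfl
  obtain ⟨a, b, hb, hab⟩ := exists_pow_eq_pow_of_zpow_mul_zpow_eq_one
    (by exact_mod_cast (show 1 < m by omega)) (by exact_mod_cast (show 1 < n by omega)) hkl h
  obtain ⟨c, rfl⟩ := Nat.dvd_of_pow_eq_pow hm hmn hb (by exact_mod_cast hab)
  rcases c with _ | _ | c
  · omega
  · simp
  · right; right; right; left; nlinarith

lemma not_eq_one_or_eq_or_two_mul_le_of_near {H A B : ℝ} (hH : 2 ≤ H)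
    (hA : |3 / 5 * H - A| < H / 100) (hB : |4 / 5 * H - B| < H / 100) {m n : ℕ}
    (hm : A ^ 2 = m) (hn : B ^ 2 = n) :
    ¬ (m = 1 ∨ n = 1 ∨ m = n ∨ 2 * m ≤ n ∨ 2 * n ≤ m) := by
  obtain ⟨hA₁, hA₂⟩ := abs_lt.1 hA
  obtain ⟨hB₁, hB₂⟩ := abs_lt.1 hB
  have hm1 : 1 < (m : ℝ) := by nlinarith
  have hmn : (m : ℝ) < n := by nlinarith
  have hnm : (n : ℝ) < 2 * m := by nlinarith
  have : 1 < m ∧ m < n ∧ n < 2 * m :=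
    ⟨by exact_mod_cast hm1, by exact_mod_cast hmn, by exact_mod_cast hnm⟩
  omega

lemma abs_norm_sub_norm_le_dist {ι : Type*} [Fintype ι] {E : Type*} [SeminormedAddCommGroup E]
    (x y : EuclideanSpace E ι) (i : ι) : |‖x i‖ - ‖y i‖| ≤ dist x y :=
  (abs_norm_sub_norm_le _ _).trans ((dist_eq_norm _ _).symm.trans_le (PiLp.dist_apply_le x y i))

lemma norm_three_fifths_four_fifths {H : ℝ} (hH : 0 ≤ H) :
    ‖!₂[((3 / 5 * H : ℝ) : ℂ), ((4 / 5 * H : ℝ) : ℂ)]‖ = H := by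
  rw [EuclideanSpace.norm_eq, Fin.sum_univ_two]
  simp only [Matrix.cons_val_zero, Matrix.cons_val_one, Complex.norm_real,
    Real.norm_eq_abs, sq_abs]
  rw [show (3 / 5 * H) ^ 2 + (4 / 5 * H) ^ 2 = H ^ 2 by ring, Real.sqrt_sq hH]

lemma le_ciSup_ciInf {ι κ : Sort*} {α : Type*} [ConditionallyCompleteLattice α]
    {f : ι → κ → α} (hf : ∀ i, BddBelow (Set.range (f i))) {j₀ : κ} {C : α}
    (hC : ∀ i, f i j₀ ≤ C) {c : α} (i₀ : ι) (hc : ∀ j, c ≤ f i₀ j) : c ≤ ⨆ i, ⨅ j, f i j := by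
  have : Nonempty κ := ⟨j₀⟩
  refine le_ciSup_of_le ⟨C, ?_⟩ i₀ (le_ciInf hc)
  rintro _ ⟨i, rfl⟩
  exact ciInf_le_of_le (hf i) j₀ (hC i)

/-- The paper's `M₂(O_K)`. -/
def multDepIntegralPairs (K : Subfield ℂ) : Set (Fin 2 → ℂ) :=
  {v | (∀ i, v i ∈ K ∧ IsIntegral ℤ (v i) ∧ v i ≠ 0) ∧
    ∃ k : Fin 2 → ℤ, k ≠ 0 ∧ ∏ i, v i ^ k i = 1}

lemma const_one_mem_multDepIntegralPairs (K : Subfield ℂ) :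
    (fun _ => 1) ∈ multDepIntegralPairs K :=
  ⟨fun _ => ⟨K.one_mem, isIntegral_one, one_ne_zero⟩, 1, one_ne_zero, by simp⟩

section QuadraticSubfield

variable {K : Subfield ℂ}

lemma exists_rat_add_rat_mul_eq (h2 : finrank ℚ K = 2) {α : ℂ} (hαK : α ∈ K)
    (hα : α.im ≠ 0) {γ : ℂ} (hγ : γ ∈ K) : ∃ s t : ℚ, γ = s + t * α := by
  have hli : LinearIndependent ℚ ![(1 : K), ⟨α, hαK⟩] := by
    refine LinearIndependent.pair_iff.2 fun s t hst => ?_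
    have hC : (s : ℂ) + t * α = 0 := by simpa [Rat.smul_def] using congrArg Subtype.val hst
    have ht : t = 0 := by
      have := congrArg Complex.im hC
      simp only [Complex.add_im, Complex.ratCast_im, Complex.mul_im, Complex.ratCast_re,
        zero_add, zero_mul, add_zero] at this
      exact_mod_cast (mul_eq_zero.1 this).resolve_right hα
    subst ht
    exact ⟨by simpa using hC, rfl⟩
  have hspan := hli.span_eq_top_of_card_eq_finrank (by simp [h2])
  have hmem : (⟨γ, hγ⟩ : K) ∈ Submodule.span ℚ (Set.range ![(1 : K), ⟨α, hαK⟩]) :=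
    hspan ▸ trivial
  rw [Matrix.range_cons_cons_empty, Submodule.mem_span_pair] at hmem
  obtain ⟨s, t, hst⟩ := hmem
  exact ⟨s, t, by simpa [Rat.smul_def, eq_comm] using congrArg Subtype.val hst⟩

lemma exists_ratCast_eq_mul_conj (h2 : finrank ℚ K = 2)
    (him : ¬ (K : Set ℂ) ⊆ {z : ℂ | z.im = 0}) {γ : ℂ} (hγ : γ ∈ K) :
    ∃ r : ℚ, γ * conj γ = r := by
  obtain ⟨α, hαK, hα⟩ := Set.not_subset.1 him
  obtain ⟨p, q, hpq⟩ := exists_rat_add_rat_mul_eq h2 hαK hα (K.mul_mem hαK hαK)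
  have hconj : conj α = q - α :=
    mod_cast conj_eq_sub_of_sq_eq (p := p) (q := q) hα (by push_cast; rw [sq, hpq])
  obtain ⟨s, t, rfl⟩ := exists_rat_add_rat_mul_eq h2 hαK hα hγ
  refine ⟨s ^ 2 + s * t * q - t ^ 2 * p, ?_⟩
  simp only [map_add, map_mul, map_ratCast, hconj]
  push_cast
  linear_combination (-(t : ℂ) ^ 2) * hpq

lemma exists_natCast_eq_sq_norm (h2 : finrank ℚ K = 2)
    (him : ¬ (K : Set ℂ) ⊆ {z : ℂ | z.im = 0}) {γ : ℂ} (hγ : γ ∈ K) (hint : IsIntegral ℤ γ) :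
    ∃ n : ℕ, ‖γ‖ ^ 2 = n := by
  obtain ⟨r, hr⟩ := exists_ratCast_eq_mul_conj h2 him hγ
  have hrint : IsIntegral ℤ r := by
    have : IsIntegral ℤ (γ * conj γ) := hint.mul (hint.map (starRingEnd ℂ).toIntAlgHom)
    rw [hr] at this
    exact (isIntegral_algebraMap_iff (algebraMap ℚ ℂ).injective).1 this
  obtain ⟨z, rfl⟩ := IsIntegrallyClosed.isIntegral_iff.1 hrint
  have hnorm : ‖γ‖ ^ 2 = z := by
    rw [← Complex.normSq_eq_norm_sq]
    exact_mod_cast (Complex.mul_conj γ).symm.trans hr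
  obtain ⟨n, rfl⟩ := Int.eq_ofNat_of_zero_le (by exact_mod_cast hnorm ▸ sq_nonneg ‖γ‖ : 0 ≤ z)
  exact ⟨n, mod_cast hnorm⟩

lemma one_le_norm_of_ne_zero (h2 : finrank ℚ K = 2) (him : ¬ (K : Set ℂ) ⊆ {z : ℂ | z.im = 0})
    {γ : ℂ} (hγ : γ ∈ K) (hint : IsIntegral ℤ γ) (h0 : γ ≠ 0) : 1 ≤ ‖γ‖ := by
  obtain ⟨n, hn⟩ := exists_natCast_eq_sq_norm h2 him hγ hint
  have hn0 : n ≠ 0 := by rintro rfl; simp_all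
  rw [← one_le_sq_iff₀ (norm_nonneg γ), hn]
  exact_mod_cast Nat.one_le_iff_ne_zero.2 hn0

lemma sqrt_two_le_norm (h2 : finrank ℚ K = 2) (him : ¬ (K : Set ℂ) ⊆ {z : ℂ | z.im = 0})
    {γ : ℂ} (hγ : γ ∈ K) (hint : IsIntegral ℤ γ) (h1 : 1 < ‖γ‖) : √2 ≤ ‖γ‖ := by
  obtain ⟨n, hn⟩ := exists_natCast_eq_sq_norm h2 him hγ hint
  have hn1 : 1 < n := by exact_mod_cast hn ▸ one_lt_pow₀ h1 two_ne_zero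
  rw [Real.sqrt_le_left (norm_nonneg γ), hn]
  exact_mod_cast hn1

lemma exists_sq_norm_eq_of_mem_multDepIntegralPairs (h2 : finrank ℚ K = 2)
    (him : ¬ (K : Set ℂ) ⊆ {z : ℂ | z.im = 0}) {v : Fin 2 → ℂ}
    (hv : v ∈ multDepIntegralPairs K) :
    ∃ m n : ℕ, ‖v 0‖ ^ 2 = m ∧ ‖v 1‖ ^ 2 = n ∧
      (m = 1 ∨ n = 1 ∨ m = n ∨ 2 * m ≤ n ∨ 2 * n ≤ m) := by
  obtain ⟨hmem, k, hk, hprod⟩ := hv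
  obtain ⟨m, hm⟩ := exists_natCast_eq_sq_norm h2 him (hmem 0).1 (hmem 0).2.1
  obtain ⟨n, hn⟩ := exists_natCast_eq_sq_norm h2 him (hmem 1).1 (hmem 1).2.1
  have hpos : ∀ i, 0 < ‖v i‖ ^ 2 := fun i => pow_pos (norm_pos_iff.2 (hmem i).2.2) 2
  have hnorm : ‖v 0‖ ^ k 0 * ‖v 1‖ ^ k 1 = 1 := by
    simpa [Fin.prod_univ_two, norm_zpow] using congrArg norm hprod
  refine ⟨m, n, hm, hn, Nat.eq_one_or_eq_or_two_mul_le_of_zpow_mul_zpow_eq_one (k := k 0)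
    (l := k 1) (by exact_mod_cast hm ▸ hpos 0) (by exact_mod_cast hn ▸ hpos 1) ?_ ?_⟩
  · by_contra! hk0
    exact hk (funext (Fin.forall_fin_two.2 hk0))
  · rw [← hm, ← hn, ← zpow_natCast, ← zpow_natCast, zpow_comm, zpow_comm ‖v 1‖, ← mul_zpow,
      hnorm, one_zpow]

lemma exists_forall_le_dist_multDepIntegralPairs (h2 : finrank ℚ K = 2)
    (him : ¬ (K : Set ℂ) ⊆ {z : ℂ | z.im = 0}) {H : ℝ} (hH : 0 ≤ H) :
    ∃ z : EuclideanSpace ℂ (Fin 2), ‖z‖ ≤ H ∧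
      ∀ v ∈ multDepIntegralPairs K, H / 100 ≤ dist z (WithLp.toLp 2 v) := by
  rcases le_or_gt H 2 with hH2 | hH2
  · refine ⟨0, by simpa using hH, fun v hv => ?_⟩
    have h1 : 1 ≤ ‖v 0‖ := one_le_norm_of_ne_zero h2 him (hv.1 0).1 (hv.1 0).2.1 (hv.1 0).2.2
    calc H / 100 ≤ ‖v 0‖ := by linarith
      _ ≤ dist 0 (WithLp.toLp 2 v) :=
        dist_zero_left (WithLp.toLp 2 v) ▸ PiLp.norm_apply_le (WithLp.toLp 2 v) 0
  refine ⟨_, (norm_three_fifths_four_fifths hH).le, fun v hv => ?_⟩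
  obtain ⟨m, n, hm, hn, hmn⟩ := exists_sq_norm_eq_of_mem_multDepIntegralPairs h2 him hv
  by_contra! hlt
  refine not_eq_one_or_eq_or_two_mul_le_of_near hH2.le ?_ ?_ hm hn hmn
  · have := (abs_norm_sub_norm_le_dist _ _ 0).trans_lt hlt
    simpa [abs_of_nonneg hH] using this
  · have := (abs_norm_sub_norm_le_dist _ _ 1).trans_lt hlt
    simpa [abs_of_nonneg hH] using this

end QuadraticSubfield

/-- For an imaginary quadratic field `K`: every algebraic integer of `K` of
absolute value greater than 1 has absolute value at least `√2`, and
`μ₂(H; O_K) ≥ c·H`. -/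
theorem stmt_19 (K : Subfield ℂ) (h2 : Module.finrank ℚ K = 2)
    (him : ¬ (K : Set ℂ) ⊆ {z : ℂ | z.im = 0}) :
    (∀ γ : ℂ, γ ∈ K → IsIntegral ℤ γ → 1 < ‖γ‖ →
      Real.sqrt 2 ≤ ‖γ‖) ∧
    ∃ c : ℝ, 0 < c ∧ ∀ H : ℝ, 1 < H →
      c * H ≤
        ⨆ z : {z : EuclideanSpace ℂ (Fin 2) // ‖z‖ ≤ H},
          ⨅ v : {v : Fin 2 → ℂ // (∀ i, v i ∈ K ∧ IsIntegral ℤ (v i) ∧ v i ≠ 0) ∧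
              ∃ k : Fin 2 → ℤ, k ≠ 0 ∧ ∏ i, v i ^ k i = 1},
            dist (z : EuclideanSpace ℂ (Fin 2))
              (WithLp.toLp 2 (v : Fin 2 → ℂ) : EuclideanSpace ℂ (Fin 2)) := by
  refine ⟨fun γ hγ hint h1 => sqrt_two_le_norm h2 him hγ hint h1, 1 / 100, by norm_num,
    fun H hH => ?_⟩
  obtain ⟨z, hz, hzv⟩ := exists_forall_le_dist_multDepIntegralPairs h2 him (H := H) (by linarith)
  rw [one_div_mul_eq_div]
  exact le_ciSup_ciInf (fun _ => ⟨0, Set.forall_mem_range.2 fun _ => dist_nonneg⟩)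
    (j₀ := ⟨_, const_one_mem_multDepIntegralPairs K⟩)
    (fun z => (dist_le_norm_add_norm _ _).trans (add_le_add_left z.2 _)) ⟨z, hz⟩
    (fun v => hzv v v.2)
end
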